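/- arXiv:2402.10815 — 11 statements merged into one kernel-verified Lean document; each statement's English description precedes it below -/
import Mathlib

section
/- Every additively separable hedonic game on a finite graph admits a 2-core stable partition: for every finite simple graph G with rational edge weights w there exists a partition 𝒫 of V(G) such that no blocking coalition of size at most 2 exists. -/
open Finset

noncomputable section
open scoped Classical

variable {V : Type*}

/-- The utility of agent `u` in the coalition `X`: the sum of the weights of the
edges joining `u` to members of `X`. -/
def ut (G : SimpleGraph V) (w : V → V → ℚ) (X : Finset V) (u : V) : ℚ :=
  ∑ v ∈ X.filter (fun v => G.Adj u v), w u v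

/-- `P` encodes a partition of the vertex set: `P u` is the part containing `u`. -/
def IsPartitionFun (P : V → Finset V) : Prop :=
  (∀ u, u ∈ P u) ∧ ∀ u v, v ∈ P u → P v = P u

/-- `X` is a blocking coalition for the partition `P`. -/
def Blocking (G : SimpleGraph V) (w : V → V → ℚ) (P : V → Finset V)
    (X : Finset V) : Prop :=
  X.Nonempty ∧ ∀ u ∈ X, ut G w (P u) u < ut G w X u

/-- The partition `P` is core stable: it admits no blocking coalition. -/
def CoreStable (G : SimpleGraph V) (w : V → V → ℚ) (P : V → Finset V) : Prop :=
  ∀ X : Finset V, ¬ Blocking G w P X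

/-- The partition `P` is `k`-core stable: it admits no blocking coalition of size at most `k`. -/
def KCoreStable (k : ℕ) (G : SimpleGraph V) (w : V → V → ℚ) (P : V → Finset V) : Prop :=
  ∀ X : Finset V, X.card ≤ k → ¬ Blocking G w P X

lemma ut_singleton (G : SimpleGraph V) (w : V → V → ℚ) (u : V) :
    ut G w {u} u = 0 := by
  simp [ut, Finset.filter_singleton, G.irrefl]

lemma ut_pair (G : SimpleGraph V) (w : V → V → ℚ) {u v : V} (h : G.Adj u v) :
    ut G w {u, v} u = w u v := by
  have hirr : ¬ G.Adj u u := G.irrefl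
  simp [ut, Finset.filter_insert, Finset.filter_singleton, hirr, h]

lemma aux_two_core [Fintype V] (G : SimpleGraph V) (w : V → V → ℚ)
    (hw : ∀ u v, w u v = w v u) (s : Finset V) :
    ∃ P : V → Finset V, (∀ u, u ∈ P u) ∧ (∀ u v, v ∈ P u → P v = P u) ∧
      (∀ u ∈ s, P u ⊆ s) ∧ (∀ u, u ∉ s → P u = {u}) ∧
      ∀ X ⊆ s, X.card ≤ 2 → ¬ Blocking G w P X := by
  induction s using Finset.strongInduction with
  | _ s ih =>
  by_cases hpos : ((s ×ˢ s).filter (fun p => G.Adj p.1 p.2 ∧ 0 < w p.1 p.2)).Nonempty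
  · -- there is a positive edge inside s; pick one of maximum weight
    obtain ⟨p, hpmem, hpmax⟩ :=
      Finset.exists_max_image _ (fun p : V × V => w p.1 p.2) hpos
    obtain ⟨hpin, hpadj, hpw⟩ := Finset.mem_filter.mp hpmem
    set u₀ := p.1
    set v₀ := p.2
    have hu₀s : u₀ ∈ s := (Finset.mem_product.mp hpin).1
    have hv₀s : v₀ ∈ s := (Finset.mem_product.mp hpin).2
    have hne : u₀ ≠ v₀ := hpadj.ne
    set M : ℚ := w u₀ v₀ with hM
    -- key bound: any adjacent pair inside s has weight at most M
    have hbound : ∀ x ∈ s, ∀ y ∈ s, G.Adj x y → w x y ≤ M := by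
      intro x hx y hy hxy
      by_cases h0 : 0 < w x y
      · exact hpmax (x, y) (Finset.mem_filter.mpr ⟨Finset.mem_product.mpr ⟨hx, hy⟩, hxy, h0⟩)
      · exact le_trans (not_lt.mp h0) (le_of_lt hpw)
    set s' := s \ {u₀, v₀} with hs'
    have hsub : ({u₀, v₀} : Finset V) ⊆ s := by
      intro x hx
      rcases Finset.mem_insert.mp hx with rfl | hx
      · exact hu₀s
      · rcases Finset.mem_singleton.mp hx with rfl
        exact hv₀s
    have hss : s' ⊂ s := Finset.sdiff_ssubset hsub ⟨u₀, Finset.mem_insert_self _ _⟩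
    obtain ⟨P', h1', h2', h3', h4', h5'⟩ := ih s' hss
    set P : V → Finset V := fun x => if x = u₀ ∨ x = v₀ then {u₀, v₀} else P' x with hPdef
    have hPu₀ : P u₀ = {u₀, v₀} := by simp [hPdef]
    have hPv₀ : P v₀ = {u₀, v₀} := by simp [hPdef]
    have hPother : ∀ x, ¬ (x = u₀ ∨ x = v₀) → P x = P' x := by
      intro x hx; simp [hPdef, hx]
    have hnotin : ∀ x, ¬ (x = u₀ ∨ x = v₀) → x ∉ ({u₀, v₀} : Finset V) := by
      intro x hx hmem
      rcases Finset.mem_insert.mp hmem with h | h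
      · exact hx (Or.inl h)
      · exact hx (Or.inr (Finset.mem_singleton.mp h))
    have hP'avoid : ∀ x, ¬ (x = u₀ ∨ x = v₀) → ∀ y ∈ P' x, ¬ (y = u₀ ∨ y = v₀) := by
      intro x hx y hy
      by_cases hxs' : x ∈ s'
      · have := h3' x hxs' hy
        intro hc
        have : y ∈ s' := this
        rw [hs', Finset.mem_sdiff] at this
        rcases hc with rfl | rfl
        · exact this.2 (Finset.mem_insert_self _ _)
        · exact this.2 (Finset.mem_insert_of_mem (Finset.mem_singleton_self _))
      · rw [h4' x hxs'] at hy
        rw [Finset.mem_singleton.mp hy]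
        exact hx
    refine ⟨P, ?_, ?_, ?_, ?_, ?_⟩
    · -- reflexivity
      intro u
      by_cases hu : u = u₀ ∨ u = v₀
      · rcases hu with rfl | rfl
        · rw [hPu₀]; exact Finset.mem_insert_self _ _
        · rw [hPv₀]; exact Finset.mem_insert_of_mem (Finset.mem_singleton_self _)
      · rw [hPother u hu]; exact h1' u
    · -- partition property
      intro u v hv
      by_cases hu : u = u₀ ∨ u = v₀
      · have hPu : P u = {u₀, v₀} := by
          rcases hu with rfl | rfl
          · exact hPu₀
          · exact hPv₀
        rw [hPu] at hv
        rcases Finset.mem_insert.mp hv with rfl | hv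
        · rw [hPu₀, hPu]
        · rw [Finset.mem_singleton.mp hv, hPv₀, hPu]
      · rw [hPother u hu] at hv
        have hvne := hP'avoid u hu v hv
        rw [hPother v hvne, hPother u hu, h2' u v hv]
    · -- P u ⊆ s for u ∈ s
      intro u hu
      by_cases h : u = u₀ ∨ u = v₀
      · rcases h with rfl | rfl
        · rw [hPu₀]; exact hsub
        · rw [hPv₀]; exact hsub
      · rw [hPother u h]
        have hus' : u ∈ s' := by
          rw [hs', Finset.mem_sdiff]
          exact ⟨hu, hnotin u h⟩
        exact (h3' u hus').trans (Finset.sdiff_subset)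
    · -- P u = {u} for u ∉ s
      intro u hu
      have h : ¬ (u = u₀ ∨ u = v₀) := by
        rintro (rfl | rfl)
        · exact hu hu₀s
        · exact hu hv₀s
      rw [hPother u h]
      apply h4'
      rw [hs', Finset.mem_sdiff]
      intro hc
      exact hu hc.1
    · -- stability
      intro X hXs hXcard ⟨hXne, hblk⟩
      by_cases hmeet : ∃ x ∈ X, x = u₀ ∨ x = v₀
      · obtain ⟨x, hxX, hx⟩ := hmeet
        have hPx : ut G w (P x) x = M := by
          rcases hx with rfl | rfl
          · rw [hPu₀, ut_pair G w hpadj]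
          · rw [hPv₀, Finset.pair_comm, ut_pair G w hpadj.symm, hw]
        -- ut X x ≤ M
        have hutle : ut G w X x ≤ M := by
          set F := X.filter (fun v => G.Adj x v) with hF
          have hFsub : F ⊆ X.erase x := by
            intro y hy
            obtain ⟨hyX, hyadj⟩ := Finset.mem_filter.mp hy
            exact Finset.mem_erase.mpr ⟨fun hc => (G.irrefl (v := x)) (hc ▸ hyadj), hyX⟩
          have hFcard : F.card ≤ 1 := by
            calc F.card ≤ (X.erase x).card := Finset.card_le_card hFsub
              _ ≤ X.card - 1 := le_of_eq (Finset.card_erase_of_mem hxX)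
              _ ≤ 1 := by omega
          rcases Finset.eq_empty_or_nonempty F with hFe | ⟨y, hy⟩
          · show (∑ v ∈ F, w x v) ≤ M
            rw [hFe, Finset.sum_empty]
            exact le_of_lt hpw
          · have hFy : F = {y} := by
              apply Finset.eq_singleton_iff_unique_mem.mpr
              exact ⟨hy, fun z hz => Finset.card_le_one.mp hFcard z hz y hy⟩
            show (∑ v ∈ F, w x v) ≤ M
            rw [hFy, Finset.sum_singleton]
            obtain ⟨hyX, hyadj⟩ := Finset.mem_filter.mp (hFy ▸ Finset.mem_singleton_self y)
            have hxs : x ∈ s := hXs hxX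
            have hys : y ∈ s := hXs hyX
            exact hbound x hxs y hys hyadj
        have := hblk x hxX
        rw [hPx] at this
        exact absurd this (not_lt.mpr hutle)
      · -- X avoids u₀, v₀ entirely, so it would block P'
        push_neg at hmeet
        have hXs' : X ⊆ s' := by
          intro y hy
          rw [hs', Finset.mem_sdiff]
          exact ⟨hXs hy, hnotin y (not_or.mpr (hmeet y hy))⟩
        apply h5' X hXs' hXcard
        refine ⟨hXne, fun y hy => ?_⟩
        have := hblk y hy
        rwa [hPother y (not_or.mpr (hmeet y hy))] at this
  · -- no positive edge inside s: all singletons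
    refine ⟨fun u => {u}, fun u => Finset.mem_singleton_self u,
      fun u v hv => by rw [Finset.mem_singleton.mp hv], fun u hu => Finset.singleton_subset_iff.mpr hu,
      fun u _ => rfl, ?_⟩
    intro X hXs hXcard ⟨⟨x, hx⟩, hblk⟩
    have h1 := hblk x hx
    rw [ut_singleton] at h1
    have : ut G w X x ≤ 0 := by
      apply Finset.sum_nonpos
      intro y hy
      obtain ⟨hyX, hyadj⟩ := Finset.mem_filter.mp hy
      by_contra hc
      exact hpos ⟨(x, y), Finset.mem_filter.mpr
        ⟨Finset.mem_product.mpr ⟨hXs hx, hXs hyX⟩, hyadj, lt_of_not_ge hc⟩⟩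
    exact absurd h1 (not_lt.mpr this)

/-- Every additively separable hedonic game on a finite graph admits a
2-core stable partition. -/
theorem exists_two_core_stable [Fintype V] (G : SimpleGraph V) (w : V → V → ℚ)
    (hw : ∀ u v, w u v = w v u) :
    ∃ P : V → Finset V, IsPartitionFun P ∧ KCoreStable 2 G w P := by
  obtain ⟨P, h1, h2, _, _, h5⟩ := aux_two_core G w hw Finset.univ
  exact ⟨P, ⟨h1, h2⟩, fun X hX => h5 X (Finset.subset_univ X) hX⟩
end
end

section
/- Let (G,w) be an ASHG, 𝒫 a partition of V(G), and let 𝒫' be the refinement of 𝒫 obtained by replacing each part P ∈ 𝒫 by the vertex sets of the connected components of the induced subgraph G[P]. Then ut_{𝒫'}(u) = ut_𝒫(u) for every u ∈ V(G); consequently a set X is a blocking coalition for 𝒫 if and only if X is a blocking coalition for 𝒫', and 𝒫 is core stable (respectively k-core stable) if and only if 𝒫' is core stable (respectively k-core stable). -/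
open Finset

noncomputable section
open scoped Classical

variable {V : Type*}

/-- The subgraph of `G` induced by the vertex set `X`, viewed as a graph on
the full vertex set (vertices outside `X` are isolated). -/
def restrict (G : SimpleGraph V) (X : Finset V) : SimpleGraph V where
  Adj a b := G.Adj a b ∧ a ∈ X ∧ b ∈ X
  symm := by
    constructor
    rintro a b ⟨h, ha, hb⟩
    exact ⟨h.symm, hb, ha⟩
  loopless := by
    constructor
    rintro a ⟨h, -, -⟩
    exact G.loopless.irrefl a h

section Utility

variable {G : SimpleGraph V} {w : V → V → ℚ}

theorem ut_eq_of_subset_of_adj_mem {X Y : Finset V} {u : V} (hYX : Y ⊆ X)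
    (hadj : ∀ v ∈ X, G.Adj u v → v ∈ Y) : ut G w Y u = ut G w X u := by
  unfold ut
  congr 1
  ext v
  simp only [mem_filter]
  exact ⟨fun ⟨hv, huv⟩ => ⟨hYX hv, huv⟩, fun ⟨hv, huv⟩ => ⟨hadj v hv huv, huv⟩⟩

theorem ut_component_eq {P P' : V → Finset V} (hP : IsPartitionFun P)
    (hP' : ∀ u v, v ∈ P' u ↔ v ∈ P u ∧ (restrict G (P u)).Reachable u v) (u : V) :
    ut G w (P' u) u = ut G w (P u) u :=
  ut_eq_of_subset_of_adj_mem (fun v hv => ((hP' u v).1 hv).1)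
    fun v hv huv => (hP' u v).2 ⟨hv, SimpleGraph.Adj.reachable ⟨huv, hP.1 u, hv⟩⟩

variable {P Q : V → Finset V}

theorem blocking_congr (h : ∀ u, ut G w (P u) u = ut G w (Q u) u) (X : Finset V) :
    Blocking G w P X ↔ Blocking G w Q X := by
  simp only [Blocking, h]

theorem coreStable_congr (h : ∀ u, ut G w (P u) u = ut G w (Q u) u) :
    CoreStable G w P ↔ CoreStable G w Q := by
  simp only [CoreStable, blocking_congr h]

theorem kCoreStable_congr (h : ∀ u, ut G w (P u) u = ut G w (Q u) u) (k : ℕ) :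
    KCoreStable k G w P ↔ KCoreStable k G w Q := by
  simp only [KCoreStable, blocking_congr h]

end Utility

theorem IsPartitionFun.of_mem_iff_reachable {G : SimpleGraph V} {P P' : V → Finset V}
    (hP : IsPartitionFun P)
    (hP' : ∀ u v, v ∈ P' u ↔ v ∈ P u ∧ (restrict G (P u)).Reachable u v) :
    IsPartitionFun P' := by
  refine ⟨fun u => (hP' u u).2 ⟨hP.1 u, .refl u⟩, fun u v hv => ?_⟩
  obtain ⟨hvP, huv⟩ := (hP' u v).1 hv
  ext x
  rw [hP' v x, hP' u x, hP.2 u v hvP]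
  exact and_congr_right fun _ => ⟨huv.trans, huv.symm.trans⟩

theorem refinement_into_components_general [Fintype V] (G : SimpleGraph V) (w : V → V → ℚ)
    (P : V → Finset V) (hP : IsPartitionFun P)
    (P' : V → Finset V)
    (hP' : ∀ u, P' u = (P u).filter (fun v => (restrict G (P u)).Reachable u v)) :
    IsPartitionFun P' ∧
    (∀ u, ut G w (P' u) u = ut G w (P u) u) ∧
    (∀ X : Finset V, Blocking G w P X ↔ Blocking G w P' X) ∧
    (CoreStable G w P ↔ CoreStable G w P') ∧
    (∀ k : ℕ, KCoreStable k G w P ↔ KCoreStable k G w P') := by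
  -- `hP'` filters with the `Fintype`-derived `Decidable` instance; the lemmas take membership
  -- characterizations so that they are independent of that instance.
  have hmem (u v : V) : v ∈ P' u ↔ v ∈ P u ∧ (restrict G (P u)).Reachable u v := by
    rw [hP', mem_filter]
  have hut (u : V) : ut G w (P u) u = ut G w (P' u) u := (ut_component_eq hP hmem u).symm
  exact ⟨hP.of_mem_iff_reachable hmem, fun u => (hut u).symm, blocking_congr hut,
    coreStable_congr hut, kCoreStable_congr hut⟩

/-- replacing every part of a partition by the connected components of the
subgraph it induces does not change any utility; hence blocking coalitions, core
stability and `k`-core stability are unaffected. -/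
theorem refinement_into_components [Fintype V] (G : SimpleGraph V) (w : V → V → ℚ)
    (hw : ∀ u v, w u v = w v u)
    (P : V → Finset V) (hP : IsPartitionFun P)
    (P' : V → Finset V)
    (hP' : ∀ u, P' u = (P u).filter (fun v => (restrict G (P u)).Reachable u v)) :
    IsPartitionFun P' ∧
    (∀ u, ut G w (P' u) u = ut G w (P u) u) ∧
    (∀ X : Finset V, Blocking G w P X ↔ Blocking G w P' X) ∧
    (CoreStable G w P ↔ CoreStable G w P') ∧
    (∀ k : ℕ, KCoreStable k G w P ↔ KCoreStable k G w P') :=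
  refinement_into_components_general G w P hP P' hP'
end
end

section
/- For every integer ρ < −15, the ASHG (H, w_ρ) admits no core stable partition. -/
open Finset

noncomputable section
open scoped Classical

variable {V : Type*}

/-- The weight function of the gadget `(H, w_ρ)`: vertex `0` plays the role of the
apex `h`, and vertex `i` (for `1 ≤ i ≤ 5`) plays the role of `h_i`. -/
def wH (ρ : ℚ) (i j : Fin 6) : ℚ :=
  if i = j then 0
  else if ({i, j} : Finset (Fin 6)) = {0, 1} ∨ ({i, j} : Finset (Fin 6)) = {2, 3} ∨
      ({i, j} : Finset (Fin 6)) = {4, 5} then 5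
  else if ({i, j} : Finset (Fin 6)) = {1, 2} ∨ ({i, j} : Finset (Fin 6)) = {3, 4} ∨
      ({i, j} : Finset (Fin 6)) = {5, 0} then 4
  else if ({i, j} : Finset (Fin 6)) = {1, 3} ∨ ({i, j} : Finset (Fin 6)) = {3, 5} ∨
      ({i, j} : Finset (Fin 6)) = {5, 1} then 3
  else ρ

/- ----- auxiliary machinery ----- -/

/-- Integer version of `wH`. -/
def wZ (r : ℤ) (i j : Fin 6) : ℤ :=
  if i = j then 0
  else if ({i, j} : Finset (Fin 6)) = {0, 1} ∨ ({i, j} : Finset (Fin 6)) = {2, 3} ∨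
      ({i, j} : Finset (Fin 6)) = {4, 5} then 5
  else if ({i, j} : Finset (Fin 6)) = {1, 2} ∨ ({i, j} : Finset (Fin 6)) = {3, 4} ∨
      ({i, j} : Finset (Fin 6)) = {5, 0} then 4
  else if ({i, j} : Finset (Fin 6)) = {1, 3} ∨ ({i, j} : Finset (Fin 6)) = {3, 5} ∨
      ({i, j} : Finset (Fin 6)) = {5, 1} then 3
  else r

/-- Computable integer version of `ut`. -/
def utZ (w : Fin 6 → Fin 6 → ℤ) (X : Finset (Fin 6)) (u : Fin 6) : ℤ :=
  ∑ v ∈ X.filter (fun v => u ≠ v), w u v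

lemma ut_eq_sum (w : Fin 6 → Fin 6 → ℚ) (X : Finset (Fin 6)) (u : Fin 6) :
    ut ⊤ w X u = ∑ v ∈ X.filter (fun v => u ≠ v), w u v := by
  unfold ut
  rw [Finset.sum_filter, Finset.sum_filter]
  refine Finset.sum_congr rfl (fun v _ => ?_)
  by_cases h : u = v <;> simp [h]

lemma wH_cast (r : ℤ) (i j : Fin 6) : wH (r : ℚ) i j = ((wZ r i j : ℤ) : ℚ) := by
  unfold wH wZ; split_ifs <;> norm_num

lemma wH_le {a : ℚ} (ha : a ≤ -16) (i j : Fin 6) : wH a i j ≤ wH (-16) i j := by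
  unfold wH; split_ifs <;> simp [ha]

lemma wH_congr_good {i j : Fin 6} (h : wZ 17 i j ≠ 17) (a b : ℚ) : wH a i j = wH b i j := by
  unfold wH wZ at *; split_ifs at * <;> simp_all

/-- For a coalition with no `ρ`-edge at `u`, the utility does not depend on `ρ`. -/
lemma ut_good_eq {X : Finset (Fin 6)} {u : Fin 6} (h : ∀ v ∈ X, wZ 17 u v ≠ 17) (a : ℚ) :
    ut ⊤ (wH a) X u = ((utZ (wZ (-16)) X u : ℤ) : ℚ) := by
  rw [ut_eq_sum]
  unfold utZ
  push_cast
  refine Finset.sum_congr rfl (fun v hv => ?_)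
  have hv' := h v (Finset.mem_filter.mp hv).1
  rw [wH_congr_good hv' a (((-16 : ℤ) : ℚ)), wH_cast]

lemma F1 : ∀ u : Fin 6, ∀ S : Finset (Fin 6),
    (∃ v ∈ S, wZ 17 u v = 17) → utZ (wZ (-16)) S u < 0 := by decide

lemma F2a : ∀ S : Finset (Fin 6), (∀ v ∈ S, ∀ w ∈ S, wZ 17 v w ≠ 17) →
    0 ∈ S → 9 ≤ utZ (wZ (-16)) S 0 → S = {0,1,5} := by decide
lemma F2b : ∀ S : Finset (Fin 6), (∀ v ∈ S, ∀ w ∈ S, wZ 17 v w ≠ 17) →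
    1 ∈ S → 8 ≤ utZ (wZ (-16)) S 1 → S = {0,1,5} := by decide
lemma F2c : ∀ S : Finset (Fin 6), (∀ v ∈ S, ∀ w ∈ S, wZ 17 v w ≠ 17) →
    5 ∈ S → 7 ≤ utZ (wZ (-16)) S 5 → S = {0,1,5} ∨ S = {3,4,5} := by decide
lemma F2d : ∀ S : Finset (Fin 6), (∀ v ∈ S, ∀ w ∈ S, wZ 17 v w ≠ 17) →
    1 ∈ S → 7 ≤ utZ (wZ (-16)) S 1 → S = {0,1,5} ∨ S = {1,2,3} := by decide
lemma F2e : ∀ S : Finset (Fin 6), (∀ v ∈ S, ∀ w ∈ S, wZ 17 v w ≠ 17) →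
    2 ∈ S → 9 ≤ utZ (wZ (-16)) S 2 → S = {1,2,3} := by decide
lemma F2f : ∀ S : Finset (Fin 6), (∀ v ∈ S, ∀ w ∈ S, wZ 17 v w ≠ 17) →
    3 ∈ S → 8 ≤ utZ (wZ (-16)) S 3 → S = {1,2,3} := by decide
lemma F2g : ∀ S : Finset (Fin 6), (∀ v ∈ S, ∀ w ∈ S, wZ 17 v w ≠ 17) →
    3 ∈ S → 7 ≤ utZ (wZ (-16)) S 3 → S = {1,2,3} ∨ S = {3,4,5} := by decide
lemma F2h : ∀ S : Finset (Fin 6), (∀ v ∈ S, ∀ w ∈ S, wZ 17 v w ≠ 17) →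
    4 ∈ S → 9 ≤ utZ (wZ (-16)) S 4 → S = {3,4,5} := by decide
lemma F2i : ∀ S : Finset (Fin 6), (∀ v ∈ S, ∀ w ∈ S, wZ 17 v w ≠ 17) →
    5 ∈ S → 8 ≤ utZ (wZ (-16)) S 5 → S = {3,4,5} := by decide

/-- for every integer `ρ < -15`, the gadget `(H, w_ρ)` (a complete graph on
six vertices, vertex `0` being `h` and vertex `i` being `h_i`) admits no core stable
partition. -/
theorem gadget_H_not_core_stable (ρ : ℤ) (hρ : ρ < -15) :
    ¬ ∃ P : Fin 6 → Finset (Fin 6), IsPartitionFun P ∧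
        CoreStable (⊤ : SimpleGraph (Fin 6)) (wH (ρ : ℚ)) P := by
  rintro ⟨P, ⟨hmem, hpart⟩, hcore⟩
  have hρ' : (ρ : ℚ) ≤ -16 := by exact_mod_cast (by omega : ρ ≤ (-16 : ℤ))
  -- Step A: every agent has nonnegative utility (else its singleton blocks).
  have hA : ∀ u, (0 : ℚ) ≤ ut ⊤ (wH (ρ : ℚ)) (P u) u := by
    intro u
    have h := hcore {u}
    rw [Blocking] at h; push_neg at h
    obtain ⟨v, hv, hle⟩ := h ⟨u, Finset.mem_singleton_self u⟩
    rw [Finset.mem_singleton] at hv; subst hv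
    have hz : ut ⊤ (wH (ρ : ℚ)) {v} v = 0 := by
      rw [ut_eq_sum, Finset.filter_singleton]; simp
    rw [hz] at hle
    exact hle
  -- Step B: no part contains a ρ-edge at any of its members.
  have hB : ∀ u, ∀ v ∈ P u, wZ 17 u v ≠ 17 := by
    intro u v hv hbad
    have h1 : ut ⊤ (wH (ρ : ℚ)) (P u) u ≤ ut ⊤ (wH (-16 : ℚ)) (P u) u := by
      rw [ut_eq_sum, ut_eq_sum]
      exact Finset.sum_le_sum (fun i _ => wH_le hρ' u i)
    have h2 : ut ⊤ (wH (-16 : ℚ)) (P u) u = ((utZ (wZ (-16)) (P u) u : ℤ) : ℚ) := by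
      rw [ut_eq_sum]
      unfold utZ
      push_cast
      exact Finset.sum_congr rfl (fun i _ => by
        rw [show (-16 : ℚ) = ((-16 : ℤ) : ℚ) by norm_num, wH_cast])
    have h3 : utZ (wZ (-16)) (P u) u < 0 := F1 u (P u) ⟨v, hv, hbad⟩
    have h4 := hA u
    rw [h2] at h1
    have : ((utZ (wZ (-16)) (P u) u : ℤ) : ℚ) < 0 := by exact_mod_cast h3
    linarith
  -- Step C: parts are pairwise good.
  have hC : ∀ u, ∀ v ∈ P u, ∀ x ∈ P u, wZ 17 v x ≠ 17 := by
    intro u v hv x hx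
    exact hB v x (by rw [hpart u v hv]; exact hx)
  -- Step D: from core stability for a good coalition `T`, some member of `T`
  -- does at least as well in its own part (in the integer model).
  have hT : ∀ T : Finset (Fin 6), T.Nonempty → (∀ v ∈ T, ∀ x ∈ T, wZ 17 v x ≠ 17) →
      ∃ u ∈ T, utZ (wZ (-16)) T u ≤ utZ (wZ (-16)) (P u) u := by
    intro T hne hgood
    have h := hcore T
    rw [Blocking] at h; push_neg at h
    obtain ⟨u, hu, hle⟩ := h hne
    refine ⟨u, hu, ?_⟩
    rw [ut_good_eq (fun v hv => hgood u hu v hv) (ρ : ℚ),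
        ut_good_eq (hB u) (ρ : ℚ)] at hle
    exact_mod_cast hle
  -- The three triangles.
  obtain ⟨u₀, hu₀, h₀⟩ := hT {0, 1, 5} ⟨0, by decide⟩ (by decide)
  obtain ⟨u₁, hu₁, h₁⟩ := hT {1, 2, 3} ⟨1, by decide⟩ (by decide)
  obtain ⟨u₂, hu₂, h₂⟩ := hT {3, 4, 5} ⟨3, by decide⟩ (by decide)
  have K0 : P 1 = {0, 1, 5} ∨ P 3 = {3, 4, 5} := by
    fin_cases hu₀
    · left
      have h9 : (9 : ℤ) ≤ utZ (wZ (-16)) (P 0) 0 := le_trans (by decide) h₀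
      have hP0 : P 0 = {0, 1, 5} := F2a (P 0) (hC 0) (hmem 0) h9
      have : P 1 = P 0 := hpart 0 1 (by rw [hP0]; decide)
      rw [this, hP0]
    · left
      have h8 : (8 : ℤ) ≤ utZ (wZ (-16)) (P 1) 1 := le_trans (by decide) h₀
      exact F2b (P 1) (hC 1) (hmem 1) h8
    · have h7 : (7 : ℤ) ≤ utZ (wZ (-16)) (P 5) 5 := le_trans (by decide) h₀
      rcases F2c (P 5) (hC 5) (hmem 5) h7 with h | h
      · left
        have : P 1 = P 5 := hpart 5 1 (by rw [h]; decide)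
        rw [this, h]
      · right
        have : P 3 = P 5 := hpart 5 3 (by rw [h]; decide)
        rw [this, h]
  have K1 : P 1 = {0, 1, 5} ∨ P 3 = {1, 2, 3} := by
    fin_cases hu₁
    · have h7 : (7 : ℤ) ≤ utZ (wZ (-16)) (P 1) 1 := le_trans (by decide) h₁
      rcases F2d (P 1) (hC 1) (hmem 1) h7 with h | h
      · exact Or.inl h
      · right
        have : P 3 = P 1 := hpart 1 3 (by rw [h]; decide)
        rw [this, h]
    · right
      have h9 : (9 : ℤ) ≤ utZ (wZ (-16)) (P 2) 2 := le_trans (by decide) h₁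
      have hP2 : P 2 = {1, 2, 3} := F2e (P 2) (hC 2) (hmem 2) h9
      have : P 3 = P 2 := hpart 2 3 (by rw [hP2]; decide)
      rw [this, hP2]
    · right
      have h8 : (8 : ℤ) ≤ utZ (wZ (-16)) (P 3) 3 := le_trans (by decide) h₁
      exact F2f (P 3) (hC 3) (hmem 3) h8
  have K2 : P 3 = {1, 2, 3} ∨ P 3 = {3, 4, 5} := by
    fin_cases hu₂
    · have h7 : (7 : ℤ) ≤ utZ (wZ (-16)) (P 3) 3 := le_trans (by decide) h₂
      exact F2g (P 3) (hC 3) (hmem 3) h7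
    · right
      have h9 : (9 : ℤ) ≤ utZ (wZ (-16)) (P 4) 4 := le_trans (by decide) h₂
      have hP4 : P 4 = {3, 4, 5} := F2h (P 4) (hC 4) (hmem 4) h9
      have : P 3 = P 4 := hpart 4 3 (by rw [hP4]; decide)
      rw [this, hP4]
    · right
      have h8 : (8 : ℤ) ≤ utZ (wZ (-16)) (P 5) 5 := le_trans (by decide) h₂
      have hP5 : P 5 = {3, 4, 5} := F2i (P 5) (hC 5) (hmem 5) h8
      have : P 3 = P 5 := hpart 5 3 (by rw [hP5]; decide)
      rw [this, hP5]
  -- Derive a contradiction.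
  have conA : P 1 = {0, 1, 5} → P 3 = {1, 2, 3} → False := by
    intro k0 k1
    have : P 1 = P 3 := hpart 3 1 (by rw [k1]; decide)
    rw [k0, k1] at this
    exact absurd this (by decide)
  have conB : P 1 = {0, 1, 5} → P 3 = {3, 4, 5} → False := by
    intro k0 k1
    have a : P 5 = P 1 := hpart 1 5 (by rw [k0]; decide)
    have b : P 5 = P 3 := hpart 3 5 (by rw [k1]; decide)
    rw [k0] at a; rw [k1] at b; rw [a] at b
    exact absurd b (by decide)
  rcases K0 with k0 | k0 <;> rcases K1 with k1 | k1
  · rcases K2 with k2 | k2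
    · exact conA k0 k2
    · exact conB k0 k2
  · exact conA k0 k1
  · exact conB k1 k0
  · rw [k0] at k1; exact absurd k1 (by decide)
end
end

section
/- Let n ≥ 1, let a_1,...,a_n be positive integers with s = Σ_i a_i, and let ε be a rational number with 0 < ε < 1/(2(n+1)). Let (G,w) be the ASHG with vertices v_1,...,v_n, x, y, x', y' and edges v_i x of weight a_i + ε and v_i y of weight −a_i for each i ∈ {1,...,n}, an edge x x' of weight 3s/2, an edge y y' of weight s/2, and an edge x y of weight s + ε. Let 𝒫 be the partition consisting of the parts {x,x'}, {y,y'}, and the singletons {v_i} for i ∈ {1,...,n}. Then 𝒫 admits a blocking coalition if and only if there exists A' ⊆ {1,...,n} with Σ_{i∈A'} a_i = s/2. -/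
open Finset

noncomputable section
open scoped Classical

variable {V : Type*}

/-- Weights of the Partition gadget: `Sum.inl i` is `v_i`, and `Sum.inr 0, 1, 2, 3`
are `x, y, x', y'` respectively.  Non-edges get weight `0`. -/
def w9 {n : ℕ} (a : Fin n → ℤ) (s : ℤ) (ε : ℚ) :
    (Fin n ⊕ Fin 4) → (Fin n ⊕ Fin 4) → ℚ
  | Sum.inl i, Sum.inr j =>
      if j = 0 then (a i : ℚ) + ε else if j = 1 then -(a i : ℚ) else 0
  | Sum.inr j, Sum.inl i =>
      if j = 0 then (a i : ℚ) + ε else if j = 1 then -(a i : ℚ) else 0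
  | Sum.inr j, Sum.inr j' =>
      if ({j, j'} : Finset (Fin 4)) = {0, 2} then 3 * (s : ℚ) / 2
      else if ({j, j'} : Finset (Fin 4)) = {1, 3} then (s : ℚ) / 2
      else if ({j, j'} : Finset (Fin 4)) = {0, 1} then (s : ℚ) + ε
      else 0
  | Sum.inl _, Sum.inl _ => 0

/-- The partition `{x,x'}, {y,y'}`, singletons `{v_i}`. -/
def P9 {n : ℕ} : (Fin n ⊕ Fin 4) → Finset (Fin n ⊕ Fin 4)
  | Sum.inl i => {Sum.inl i}
  | Sum.inr j =>
      if j = 0 ∨ j = 2 then {Sum.inr 0, Sum.inr 2} else {Sum.inr 1, Sum.inr 3}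

/-!
Neither `x'` nor `y'` can gain, and without `x` nobody gains, so `x` is in any blocking
coalition `X`; then so is `y`, since each edge `v_i x` is worth `a_i + ε ≤ 3 a_i / 2` and these
alone give `x` at most `3 s / 2`. With `L` the set of `v_i` in `X` and `T = ∑_{i ∈ L} a_i`, every
`v_i` gains `ε`, `x` gains iff `s < 2 T + 2 (|L| + 1) ε` and `y` gains iff `2 T < s + 2 ε`. Since
`2 (|L| + 1) ε < 1`, this pins the integer `2 T` to `s`; conversely, for an equal split `A'` the
coalition `{x, y} ∪ {v_i | i ∈ A'}` blocks.
-/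

theorem ut_fromRel_eq_sum (w : V → V → ℚ) (hw : ∀ u, w u u = 0) (X : Finset V) (u : V) :
    ut (SimpleGraph.fromRel fun u v => w u v ≠ 0) w X u = ∑ v ∈ X, w u v := by
  unfold ut
  convert sum_filter_of_ne (p := (SimpleGraph.fromRel fun u v => w u v ≠ 0).Adj u)
    fun v _ huv => ⟨by rintro rfl; exact huv (hw u), Or.inl huv⟩

theorem blocking_fromRel_iff (w : V → V → ℚ) (hw : ∀ u, w u u = 0) (P : V → Finset V)
    (X : Finset V) :
    Blocking (SimpleGraph.fromRel fun u v => w u v ≠ 0) w P X ↔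
      X.Nonempty ∧ ∀ u ∈ X, ∑ v ∈ P u, w u v < ∑ v ∈ X, w u v := by
  simp only [Blocking, ut_fromRel_eq_sum w hw]

theorem Finset.sum_eq_sum_toLeft_add_sum_inr {α β M : Type*} [Fintype β] [AddCommMonoid M]
    (X : Finset (α ⊕ β)) (f : α ⊕ β → M) :
    ∑ v ∈ X, f v = ∑ i ∈ X.toLeft, f (.inl i) + ∑ j, if .inr j ∈ X then f (.inr j) else 0 := by
  rw [← sum_filter, ← toLeft_disjSum_toRight (u := X), sum_disjSum, toLeft_disjSum_toRight]
  congr 2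
  ext j
  simp

theorem Int.eq_of_abs_cast_sub_lt_one {m k : ℤ} (h : |(m : ℚ) - k| < 1) : m = k := by
  have h : |m - k| < 1 := by exact_mod_cast h
  rw [abs_lt] at h
  omega

section Gadget

variable {n : ℕ} (a : Fin n → ℤ) (s : ℤ) (ε : ℚ)

theorem w9_self (u : Fin n ⊕ Fin 4) : w9 a s ε u u = 0 := by
  rcases u with i | j
  · rfl
  · fin_cases j <;> simp (config := { decide := true }) [w9]

theorem sum_P9_w9_inl (i : Fin n) : ∑ v ∈ P9 (.inl i), w9 a s ε (.inl i) v = 0 := by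
  simp [P9, w9]

theorem sum_P9_w9_x : ∑ v ∈ P9 (.inr 0), w9 a s ε (.inr 0) v = 3 * (s : ℚ) / 2 := by
  simp (config := { decide := true }) [P9, w9]

theorem sum_P9_w9_y : ∑ v ∈ P9 (.inr 1), w9 a s ε (.inr 1) v = (s : ℚ) / 2 := by
  simp (config := { decide := true }) [P9, w9]

theorem sum_P9_w9_x' : ∑ v ∈ P9 (.inr 2), w9 a s ε (.inr 2) v = 3 * (s : ℚ) / 2 := by
  simp (config := { decide := true }) [P9, w9]

theorem sum_P9_w9_y' : ∑ v ∈ P9 (.inr 3), w9 a s ε (.inr 3) v = (s : ℚ) / 2 := by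
  simp (config := { decide := true }) [P9, w9]

variable (X : Finset (Fin n ⊕ Fin 4))

theorem sum_w9_inl (i : Fin n) :
    ∑ v ∈ X, w9 a s ε (.inl i) v =
      (if .inr 0 ∈ X then (a i : ℚ) + ε else 0) + (if .inr 1 ∈ X then -(a i : ℚ) else 0) := by
  simp (config := { decide := true }) [sum_eq_sum_toLeft_add_sum_inr, Fin.sum_univ_four, w9]

theorem sum_w9_x :
    ∑ v ∈ X, w9 a s ε (.inr 0) v = ∑ i ∈ X.toLeft, ((a i : ℚ) + ε)
      + (if .inr 1 ∈ X then (s : ℚ) + ε else 0) + (if .inr 2 ∈ X then 3 * (s : ℚ) / 2 else 0) := by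
  simp (config := { decide := true }) [sum_eq_sum_toLeft_add_sum_inr, Fin.sum_univ_four, w9,
    add_assoc]

theorem sum_w9_y :
    ∑ v ∈ X, w9 a s ε (.inr 1) v = -∑ i ∈ X.toLeft, (a i : ℚ)
      + (if .inr 0 ∈ X then (s : ℚ) + ε else 0) + (if .inr 3 ∈ X then (s : ℚ) / 2 else 0) := by
  simp (config := { decide := true }) [sum_eq_sum_toLeft_add_sum_inr, Fin.sum_univ_four, w9,
    add_assoc]

theorem sum_w9_x' :
    ∑ v ∈ X, w9 a s ε (.inr 2) v = if .inr 0 ∈ X then 3 * (s : ℚ) / 2 else 0 := by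
  simp (config := { decide := true }) [sum_eq_sum_toLeft_add_sum_inr, Fin.sum_univ_four, w9]

theorem sum_w9_y' :
    ∑ v ∈ X, w9 a s ε (.inr 3) v = if .inr 1 ∈ X then (s : ℚ) / 2 else 0 := by
  simp (config := { decide := true }) [sum_eq_sum_toLeft_add_sum_inr, Fin.sum_univ_four, w9]

theorem sum_w9_x'_le (hs : 0 ≤ s) :
    ∑ v ∈ X, w9 a s ε (.inr 2) v ≤ ∑ v ∈ P9 (.inr 2), w9 a s ε (.inr 2) v := by
  have hs : (0 : ℚ) ≤ s := by exact_mod_cast hs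
  rw [sum_w9_x', sum_P9_w9_x']
  split_ifs <;> linarith

theorem sum_w9_y'_le (hs : 0 ≤ s) :
    ∑ v ∈ X, w9 a s ε (.inr 3) v ≤ ∑ v ∈ P9 (.inr 3), w9 a s ε (.inr 3) v := by
  have hs : (0 : ℚ) ≤ s := by exact_mod_cast hs
  rw [sum_w9_y', sum_P9_w9_y']
  split_ifs <;> linarith

theorem sum_w9_inl_le (i : Fin n) (ha : 0 < a i) (hx : .inr 0 ∉ X) :
    ∑ v ∈ X, w9 a s ε (.inl i) v ≤ ∑ v ∈ P9 (.inl i), w9 a s ε (.inl i) v := by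
  have ha : (0 : ℚ) < a i := by exact_mod_cast ha
  rw [sum_w9_inl, sum_P9_w9_inl, if_neg hx]
  split_ifs <;> linarith

theorem sum_w9_y_le (ha : ∀ i, 0 < a i) (hx : .inr 0 ∉ X) (hy' : .inr 3 ∉ X) (hs : 0 ≤ s) :
    ∑ v ∈ X, w9 a s ε (.inr 1) v ≤ ∑ v ∈ P9 (.inr 1), w9 a s ε (.inr 1) v := by
  have hT : 0 ≤ ∑ i ∈ X.toLeft, (a i : ℚ) := sum_nonneg fun i _ => by exact_mod_cast (ha i).le
  have hs : (0 : ℚ) ≤ s := by exact_mod_cast hs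
  rw [sum_w9_y, sum_P9_w9_y, if_neg hx, if_neg hy']
  linarith

theorem sum_w9_x_le (ha : ∀ i, 0 < a i) (hs : s = ∑ i, a i) (hε : ε ≤ 1 / 2)
    (hy : .inr 1 ∉ X) (hx' : .inr 2 ∉ X) :
    ∑ v ∈ X, w9 a s ε (.inr 0) v ≤ ∑ v ∈ P9 (.inr 0), w9 a s ε (.inr 0) v := by
  rw [sum_w9_x, sum_P9_w9_x, if_neg hy, if_neg hx', add_zero, add_zero]
  calc ∑ i ∈ X.toLeft, ((a i : ℚ) + ε)
      ≤ ∑ i ∈ X.toLeft, 3 * (a i : ℚ) / 2 := by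
        refine sum_le_sum fun i _ => ?_
        have : (1 : ℚ) ≤ a i := by exact_mod_cast ha i
        linarith
    _ ≤ ∑ i, 3 * (a i : ℚ) / 2 :=
        sum_le_sum_of_subset_of_nonneg (subset_univ _) fun i _ _ => by
          have : (0 : ℚ) < a i := by exact_mod_cast ha i
          positivity
    _ = 3 * (s : ℚ) / 2 := by rw [← sum_div, ← mul_sum, hs]; push_cast; rfl

theorem mem_of_blocking (ha : ∀ i, 0 < a i) (hs : s = ∑ i, a i) (hε : ε ≤ 1 / 2)
    (hne : X.Nonempty) (hX : ∀ u ∈ X, ∑ v ∈ P9 u, w9 a s ε u v < ∑ v ∈ X, w9 a s ε u v) :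
    .inr 0 ∈ X ∧ .inr 1 ∈ X ∧ .inr 2 ∉ X ∧ .inr 3 ∉ X := by
  have hs0 : 0 ≤ s := hs ▸ sum_nonneg fun i _ => (ha i).le
  have hx' : .inr 2 ∉ X := fun h => (hX _ h).not_ge (sum_w9_x'_le a s ε X hs0)
  have hy' : .inr 3 ∉ X := fun h => (hX _ h).not_ge (sum_w9_y'_le a s ε X hs0)
  have hx : .inr 0 ∈ X := by
    by_contra hx
    obtain ⟨u, hu⟩ := hne
    refine (hX u hu).not_ge ?_
    rcases u with i | j
    · exact sum_w9_inl_le a s ε X i (ha i) hx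
    · fin_cases j
      · exact absurd hu hx
      · exact sum_w9_y_le a s ε X ha hx hy' hs0
      · exact absurd hu hx'
      · exact absurd hu hy'
  have hy : .inr 1 ∈ X := by
    by_contra hy
    exact (hX _ hx).not_ge (sum_w9_x_le a s ε X ha hs hε hy hx')
  exact ⟨hx, hy, hx', hy'⟩

theorem blocking_iff_of_mem (hε : 0 < ε) (hx : .inr 0 ∈ X) (hy : .inr 1 ∈ X)
    (hx' : .inr 2 ∉ X) (hy' : .inr 3 ∉ X) :
    (∀ u ∈ X, ∑ v ∈ P9 u, w9 a s ε u v < ∑ v ∈ X, w9 a s ε u v) ↔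
      (s : ℚ) < 2 * ∑ i ∈ X.toLeft, (a i : ℚ) + 2 * (X.toLeft.card + 1) * ε ∧
        2 * ∑ i ∈ X.toLeft, (a i : ℚ) < s + 2 * ε := by
  have hx_gain : ∑ v ∈ P9 (.inr 0), w9 a s ε (.inr 0) v < ∑ v ∈ X, w9 a s ε (.inr 0) v ↔
      (s : ℚ) < 2 * ∑ i ∈ X.toLeft, (a i : ℚ) + 2 * (X.toLeft.card + 1) * ε := by
    rw [sum_P9_w9_x, sum_w9_x, if_pos hy, if_neg hx', sum_add_distrib, sum_const, nsmul_eq_mul]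
    constructor <;> intro <;> linarith
  have hy_gain : ∑ v ∈ P9 (.inr 1), w9 a s ε (.inr 1) v < ∑ v ∈ X, w9 a s ε (.inr 1) v ↔
      2 * ∑ i ∈ X.toLeft, (a i : ℚ) < s + 2 * ε := by
    rw [sum_P9_w9_y, sum_w9_y, if_pos hx, if_neg hy']
    constructor <;> intro <;> linarith
  refine ⟨fun h => ⟨hx_gain.1 (h _ hx), hy_gain.1 (h _ hy)⟩, fun ⟨hxc, hyc⟩ u hu => ?_⟩
  rcases u with i | j
  · rw [sum_P9_w9_inl, sum_w9_inl, if_pos hx, if_pos hy]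
    linarith
  · fin_cases j
    · exact hx_gain.2 hxc
    · exact hy_gain.2 hyc
    · exact absurd hu hx'
    · exact absurd hu hy'

end Gadget

theorem partition_gadget_blocking_iff_general (n : ℕ)
    (a : Fin n → ℤ) (ha : ∀ i, 0 < a i) (s : ℤ) (hs : s = ∑ i, a i)
    (ε : ℚ) (hε0 : 0 < ε) (hε1 : ε < 1 / (2 * (n + 1))) :
    (∃ X : Finset (Fin n ⊕ Fin 4),
        Blocking (SimpleGraph.fromRel fun u v => w9 a s ε u v ≠ 0) (w9 a s ε) P9 X)
      ↔ ∃ A' : Finset (Fin n), 2 * ∑ i ∈ A', a i = s := by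
  have hε : 2 * (n + 1) * ε < 1 := by rwa [lt_div_iff₀ (by positivity), mul_comm] at hε1
  simp only [blocking_fromRel_iff _ (w9_self a s ε)]
  constructor
  · rintro ⟨X, hne, hX⟩
    have hk : (X.toLeft.card : ℚ) ≤ n := by
      exact_mod_cast (card_le_univ _).trans_eq (Fintype.card_fin n)
    have hkε : 2 * (X.toLeft.card + 1) * ε < 1 := lt_of_le_of_lt (by gcongr) hε
    have h2ε : 2 * ε < 1 := by nlinarith [X.toLeft.card.cast_nonneg (α := ℚ)]
    obtain ⟨hx, hy, hx', hy'⟩ := mem_of_blocking a s ε X ha hs (by linarith) hne hX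
    obtain ⟨hlo, hhi⟩ := (blocking_iff_of_mem a s ε X hε0 hx hy hx' hy').1 hX
    refine ⟨X.toLeft, Int.eq_of_abs_cast_sub_lt_one ?_⟩
    push_cast
    rw [abs_lt]
    constructor <;> linarith
  · rintro ⟨A, hA⟩
    have hA : 2 * ∑ i ∈ A, (a i : ℚ) = s := by exact_mod_cast hA
    refine ⟨A.disjSum {0, 1}, ⟨.inr 0, by simp⟩, (blocking_iff_of_mem a s ε _ hε0
      (by simp) (by simp) (by simp) (by simp)).2 ?_⟩
    rw [toLeft_disjSum]
    constructor <;> nlinarith [A.card.cast_nonneg (α := ℚ)]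

/-- the Partition gadget admits a blocking coalition iff the numbers
`a_1, …, a_n` can be split into two halves of equal sum. -/
theorem partition_gadget_blocking_iff (n : ℕ) (hn : 1 ≤ n)
    (a : Fin n → ℤ) (ha : ∀ i, 0 < a i) (s : ℤ) (hs : s = ∑ i, a i)
    (ε : ℚ) (hε0 : 0 < ε) (hε1 : ε < 1 / (2 * (n + 1))) :
    (∃ X : Finset (Fin n ⊕ Fin 4),
        Blocking (SimpleGraph.fromRel fun u v => w9 a s ε u v ≠ 0) (w9 a s ε) P9 X)
      ↔ ∃ A' : Finset (Fin n), 2 * ∑ i ∈ A', a i = s :=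
  partition_gadget_blocking_iff_general n a ha s hs ε hε0 hε1
end
end

section
/- Let k ≥ 3 and n ≥ 1 be integers, let a_1,...,a_n be positive integers with s = Σ_i a_i such that k divides s, let ε = 1/(2n), δ = 1/4, and let ρ be an integer with ρ ≤ −(max_i a_i + 1). Let (G,w) be the ASHG with: a vertex x; a cycle y_1,...,y_k all of whose edges have weight 2s − s/k; a cycle z_1,...,z_k all of whose edges have weight −s; edges x y_i of weight 2s + 2s/k and y_i z_i of weight 2s + s/k + δ for every i ∈ {1,...,k}; for every i ∈ {1,...,n} a clique on vertices v_i^1,...,v_i^k all of whose edges have weight ρ; and edges v_i^j y_j of weight a_i + ε and v_i^j z_j of weight −a_i for every i ∈ {1,...,n} and j ∈ {1,...,k}. Let 𝒫 consist of the part {x, y_1,...,y_k} together with singletons for all other vertices. Then 𝒫 admits a blocking coalition if and only if the index set {1,...,n} can be partitioned into sets Q_1,...,Q_k with Σ_{i∈Q_j} a_i = s/k for every j ∈ {1,...,k}. -/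
/-!
Let `X` block. Every neighbour of `x` already lies in its part, so `x ∉ X`; a copy `v_i^j` gains
only if `y_j ∈ X` and no second copy of item `i` is in `X` (the clique weight `ρ` is too negative),
and `z_j` gains only if `y_j ∈ X`. Without `x`, a member `y_j` must make up its current utility `6s`,
which it can only do with both cycle neighbours and `z_j` in `X`; going around the cycle, `X`
contains every `y_j` and `z_j`. Then `z_j` gains iff the items `i` with `v_i^j ∈ X` weigh less than
`s/k + δ`, and `y_j` gains only if they weigh more than `s/k - δ - nε`, so every bin weighs exactly
`s/k`; as each item lies in at most one bin and the weights are positive, it lies in exactly one.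
Conversely, all `y_j`, `z_j` and one copy `v_i^{Q i}` of each item form a blocking coalition.
-/

open Finset

noncomputable section
open scoped Classical

variable {V : Type*}

/-- The vertices of the Bin Packing gadget. -/
inductive BPVtx (n k : ℕ) : Type
  | x : BPVtx n k
  | y : Fin k → BPVtx n k
  | z : Fin k → BPVtx n k
  | v : Fin n → Fin k → BPVtx n k
  deriving DecidableEq, Fintype

/-- One direction of each edge of the Bin Packing gadget. -/
def f10 {n k : ℕ} (a : Fin n → ℤ) (s ρ : ℤ) (ε δ : ℚ) :
    BPVtx n k → BPVtx n k → ℚ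
  | BPVtx.x, BPVtx.y _ => 2 * (s : ℚ) + 2 * (s : ℚ) / (k : ℚ)
  | BPVtx.y j, BPVtx.y j' => if (j' : ℕ) = ((j : ℕ) + 1) % k then 2 * (s : ℚ) - (s : ℚ) / (k : ℚ) else 0
  | BPVtx.z j, BPVtx.z j' => if (j' : ℕ) = ((j : ℕ) + 1) % k then -(s : ℚ) else 0
  | BPVtx.y j, BPVtx.z j' => if j = j' then 2 * (s : ℚ) + (s : ℚ) / (k : ℚ) + δ else 0
  | BPVtx.v i j, BPVtx.v i' j' => if i = i' ∧ j < j' then (ρ : ℚ) else 0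
  | BPVtx.v i j, BPVtx.y j' => if j = j' then (a i : ℚ) + ε else 0
  | BPVtx.v i j, BPVtx.z j' => if j = j' then -(a i : ℚ) else 0
  | _, _ => 0

/-- The (symmetric) weight function of the Bin Packing gadget. -/
def w10 {n k : ℕ} (a : Fin n → ℤ) (s ρ : ℤ) (ε δ : ℚ)
    (u v : BPVtx n k) : ℚ :=
  f10 a s ρ ε δ u v + f10 a s ρ ε δ v u

/-- The partition `{x, y_1, …, y_k}` plus singletons. -/
def P10 {n k : ℕ} : BPVtx n k → Finset (BPVtx n k)
  | BPVtx.x => insert BPVtx.x (univ.image BPVtx.y)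
  | BPVtx.y _ => insert BPVtx.x (univ.image BPVtx.y)
  | BPVtx.z j => {BPVtx.z j}
  | BPVtx.v i j => {BPVtx.v i j}

theorem ut_fromRel_ne_zero {w : V → V → ℚ} (hw : ∀ u, w u u = 0) (X : Finset V)
    (u : V) : ut (SimpleGraph.fromRel fun u v => w u v ≠ 0) w X u = ∑ v ∈ X, w u v := by
  rw [ut, sum_filter]
  refine sum_congr rfl fun v _ => ?_
  by_cases huv : u = v
  · subst huv; simp [hw]
  · by_cases h : w u v = 0 <;> simp [SimpleGraph.fromRel_adj, huv, h]

def Improves (w : V → V → ℚ) (P : V → Finset V) (X : Finset V) : Prop :=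
  ∀ u ∈ X, ∑ v ∈ P u, w u v < ∑ v ∈ X, w u v

theorem blocking_fromRel_ne_zero_iff {w : V → V → ℚ} (hw : ∀ u, w u u = 0)
    (P : V → Finset V) (X : Finset V) :
    Blocking (SimpleGraph.fromRel fun u v => w u v ≠ 0) w P X ↔ X.Nonempty ∧ Improves w P X := by
  simp only [Blocking, Improves, ut_fromRel_ne_zero hw]

theorem Fin.val_eq_add_one_mod_iff {k : ℕ} [NeZero k] (j j' : Fin k) :
    (j' : ℕ) = ((j : ℕ) + 1) % k ↔ j' = j + 1 := by
  rw [Fin.ext_iff, Fin.val_add, Fin.val_one', Nat.add_mod_mod]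

theorem eq_add_one_iff_eq_sub_one {G : Type*} [AddGroup G] [One G] (a b : G) :
    a = b + 1 ↔ b = a - 1 := by
  rw [eq_sub_iff_add_eq, eq_comm]

theorem ite_zero_le {α : Type*} [Preorder α] [Zero α] {p : Prop} [Decidable p] {c : α}
    (hc : 0 ≤ c) : (if p then c else 0) ≤ c := by
  split_ifs
  exacts [le_rfl, hc]

theorem ite_zero_nonpos {α : Type*} [Preorder α] [Zero α] {p : Prop} [Decidable p] {c : α}
    (hc : c ≤ 0) : (if p then c else 0) ≤ 0 := by
  split_ifs
  exacts [hc, le_rfl]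

open Fin.NatCast in
theorem Fin.forall_of_forall_add_one {k : ℕ} [NeZero k] {p : Fin k → Prop}
    (hstep : ∀ j, p j → p (j + 1)) {j₀ : Fin k} (h₀ : p j₀) (j : Fin k) : p j := by
  have hm : ∀ m : ℕ, p (j₀ + m) := by
    intro m
    induction m with
    | zero => simpa using h₀
    | succ m ih => simpa [Nat.cast_succ, add_assoc] using hstep _ ih
  simpa using hm (j - j₀).val

theorem exists_forall_iff_eq_of_sum_filter_eq {ι κ : Type*} [Fintype ι] [Fintype κ]
    {a : ι → ℤ} (ha : ∀ i, 0 < a i) {R : ι → κ → Prop} [∀ i j, Decidable (R i j)]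
    (huniq : ∀ i j j', R i j → R i j' → j' = j)
    (hsum : ∑ j, ∑ i ∈ univ.filter (R · j), a i = ∑ i, a i) :
    ∃ Q : ι → κ, ∀ i j, R i j ↔ Q i = j := by
  suffices hcover : ∀ i, ∃ j, R i j by
    choose Q hQ using hcover
    exact ⟨Q, fun i j => ⟨fun h => huniq i _ _ (hQ i) h |>.symm, fun h => h ▸ hQ i⟩⟩
  by_contra! hmiss
  obtain ⟨i₀, hi₀⟩ := hmiss
  have hle : ∀ i, ∑ j, (if R i j then a i else 0) ≤ a i := by
    intro i
    have hcard : #(univ.filter (R i)) ≤ 1 :=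
      card_le_one.mpr fun j hj j' hj' => huniq i j' j (mem_filter.mp hj').2 (mem_filter.mp hj).2
    rw [← sum_filter, sum_const]
    simpa using nsmul_le_nsmul_left (ha i).le hcard
  have hlt : ∑ j, (if R i₀ j then a i₀ else 0) < a i₀ := by simp [hi₀, ha]
  have := sum_lt_sum (fun i _ => hle i) ⟨i₀, mem_univ _, hlt⟩
  simp only [sum_filter] at hsum
  rw [sum_comm] at hsum
  omega

namespace BPVtx

variable {n k : ℕ} {a : Fin n → ℤ} {s ρ : ℤ} {ε δ : ℚ}

local notation "W" => w10 a s ρ ε δ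

theorem w10_self [NeZero k] (hk : 2 ≤ k) (u : BPVtx n k) : W u u = 0 := by
  cases u <;> simp [w10, f10, Fin.val_eq_add_one_mod_iff, show k ≠ 1 by omega]

theorem sum_w10_x (X : Finset (BPVtx n k)) :
    ∑ u ∈ X, W x u = ∑ j, if y j ∈ X then 2 * (s : ℚ) + 2 * s / k else 0 := by
  have hx : ∀ u : BPVtx n k, W x u = ∑ j, if u = y j then 2 * (s : ℚ) + 2 * s / k else 0 := by
    intro u; cases u <;> simp [w10, f10]
  simp only [hx]
  rw [sum_comm]
  simp [sum_ite_eq']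

theorem sum_w10_y [NeZero k] (X : Finset (BPVtx n k)) (j : Fin k) :
    ∑ u ∈ X, W (y j) u =
      (if x ∈ X then 2 * (s : ℚ) + 2 * s / k else 0)
      + (if y (j + 1) ∈ X then 2 * (s : ℚ) - s / k else 0)
      + (if y (j - 1) ∈ X then 2 * (s : ℚ) - s / k else 0)
      + (if z j ∈ X then 2 * (s : ℚ) + s / k + δ else 0)
      + ∑ i, if v i j ∈ X then (a i : ℚ) + ε else 0 := by
  have hy : ∀ u, W (y j) u =
      (if u = x then 2 * (s : ℚ) + 2 * s / k else 0)
      + (if u = y (j + 1) then 2 * (s : ℚ) - s / k else 0)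
      + (if u = y (j - 1) then 2 * (s : ℚ) - s / k else 0)
      + (if u = z j then 2 * (s : ℚ) + s / k + δ else 0)
      + ∑ i, if u = v i j then (a i : ℚ) + ε else 0 := by
    intro u
    cases u <;> simp [w10, f10, Fin.val_eq_add_one_mod_iff, eq_add_one_iff_eq_sub_one, eq_comm, ite_and]
  simp only [hy, sum_add_distrib]
  rw [sum_comm]
  simp [sum_ite_eq']

theorem sum_w10_z [NeZero k] (X : Finset (BPVtx n k)) (j : Fin k) :
    ∑ u ∈ X, W (z j) u =
      (if y j ∈ X then 2 * (s : ℚ) + s / k + δ else 0)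
      + (if z (j + 1) ∈ X then -(s : ℚ) else 0)
      + (if z (j - 1) ∈ X then -(s : ℚ) else 0)
      + ∑ i, if v i j ∈ X then -(a i : ℚ) else 0 := by
  have hz : ∀ u, W (z j) u =
      (if u = y j then 2 * (s : ℚ) + s / k + δ else 0)
      + (if u = z (j + 1) then -(s : ℚ) else 0)
      + (if u = z (j - 1) then -(s : ℚ) else 0)
      + ∑ i, if u = v i j then -(a i : ℚ) else 0 := by
    intro u
    cases u <;> simp [w10, f10, Fin.val_eq_add_one_mod_iff, eq_add_one_iff_eq_sub_one, eq_comm, ite_and]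
  simp only [hz, sum_add_distrib]
  rw [sum_comm]
  simp [sum_ite_eq']

theorem sum_w10_v (X : Finset (BPVtx n k)) (i : Fin n) (j : Fin k) :
    ∑ u ∈ X, W (v i j) u =
      (if y j ∈ X then (a i : ℚ) + ε else 0)
      + (if z j ∈ X then -(a i : ℚ) else 0)
      + #((univ.filter fun j' => v i j' ∈ X).erase j) * ρ := by
  have hv : ∀ u, W (v i j) u =
      (if u = y j then (a i : ℚ) + ε else 0)
      + (if u = z j then -(a i : ℚ) else 0)
      + ∑ j' ∈ univ.erase j, if u = v i j' then (ρ : ℚ) else 0 := by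
    intro u
    cases u with
    | v i' j' =>
      by_cases hi : i' = i
      · subst hi
        rcases lt_trichotomy j j' with h | rfl | h
        · simp [w10, f10, h, h.ne', h.not_gt]
        · simp [w10, f10]
        · simp [w10, f10, h, h.ne, h.not_gt]
      · simp [w10, f10, hi, Ne.symm hi]
    | _ => simp [w10, f10, eq_comm]
  rw [sum_congr rfl fun u _ => hv u, sum_add_distrib, sum_add_distrib, sum_comm (s := X)]
  simp only [sum_ite_eq']
  rw [← sum_filter, sum_const, nsmul_eq_mul, filter_erase]

theorem sum_P10_x : ∑ u ∈ P10 (x : BPVtx n k), W x u = k * (2 * (s : ℚ) + 2 * s / k) := by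
  rw [P10, sum_w10_x]
  simp only [mem_insert, reduceCtorEq, mem_image, mem_univ, y.injEq, true_and, exists_eq,
    or_true, ↓reduceIte, sum_const, card_univ, Fintype.card_fin, nsmul_eq_mul]

theorem sum_P10_y [NeZero k] (j : Fin k) : ∑ u ∈ P10 (y j), W (y j) u = 6 * s := by
  rw [P10, sum_w10_y]
  simp only [mem_insert, mem_image, mem_univ, reduceCtorEq, and_false, exists_const, or_false,
    ↓reduceIte, y.injEq, true_and, exists_eq, or_true, or_self, add_zero, sum_const_zero]
  ring

theorem sum_P10_z [NeZero k] (hk : 2 ≤ k) (j : Fin k) : ∑ u ∈ P10 (z j), W (z j) u = 0 := by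
  simp [P10, w10_self hk]

theorem sum_P10_v (i : Fin n) (j : Fin k) : ∑ u ∈ P10 (v i j), W (v i j) u = 0 := by
  simp [P10, w10, f10]

def packingCoalition (Q : Fin n → Fin k) : Finset (BPVtx n k) :=
  univ.filter fun
    | x => False
    | y _ => True
    | z _ => True
    | v i j => Q i = j

section Blocking

variable {X : Finset (BPVtx n k)}

theorem x_notMem (hX : Improves W P10 X) (hs : 0 ≤ s) : x ∉ X := by
  intro hx
  have hgain := hX x hx
  rw [sum_P10_x, sum_w10_x] at hgain
  have hle : ∑ j : Fin k, (if y j ∈ X then 2 * (s : ℚ) + 2 * s / k else 0)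
      ≤ ∑ _j : Fin k, (2 * (s : ℚ) + 2 * s / k) :=
    sum_le_sum fun j _ => ite_zero_le (by positivity)
  rw [sum_const, card_univ, Fintype.card_fin, nsmul_eq_mul] at hle
  linarith

theorem y_mem_of_v_mem (hX : Improves W P10 X) {i : Fin n} {j : Fin k} (hv : v i j ∈ X)
    (ha : 0 ≤ a i) (hρ : ρ ≤ 0) : y j ∈ X := by
  by_contra hy
  have hgain := hX _ hv
  rw [sum_P10_v, sum_w10_v, if_neg hy] at hgain
  have hz : (if z j ∈ X then -(a i : ℚ) else 0) ≤ 0 := ite_zero_nonpos (by simpa using ha)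
  have hv : (#((univ.filter fun j' => v i j' ∈ X).erase j) : ℚ) * ρ ≤ 0 :=
    mul_nonpos_of_nonneg_of_nonpos (Nat.cast_nonneg _) (by exact_mod_cast hρ)
  linarith

theorem eq_of_v_mem_of_v_mem (hX : Improves W P10 X) {i : Fin n} {j j' : Fin k}
    (hv : v i j ∈ X) (hv' : v i j' ∈ X) (ha : 0 ≤ a i) (hε : 0 ≤ ε)
    (hρ : (ρ : ℚ) + a i + ε ≤ 0) : j' = j := by
  by_contra hne
  have hgain := hX _ hv
  rw [sum_P10_v, sum_w10_v] at hgain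
  have hy : (if y j ∈ X then (a i : ℚ) + ε else 0) ≤ a i + ε := ite_zero_le (by positivity)
  have hz : (if z j ∈ X then -(a i : ℚ) else 0) ≤ 0 := ite_zero_nonpos (by simpa using ha)
  have hcard : 1 ≤ #((univ.filter fun j' => v i j' ∈ X).erase j) :=
    card_pos.mpr ⟨j', by simp [hne, hv']⟩
  have hpen : (#((univ.filter fun j' => v i j' ∈ X).erase j) : ℚ) * ρ ≤ ρ := by
    have : (ρ : ℚ) ≤ 0 := by linarith [show (0 : ℚ) ≤ a i by exact_mod_cast ha]
    nlinarith [show (1 : ℚ) ≤ #((univ.filter fun j' => v i j' ∈ X).erase j) by exact_mod_cast hcard]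
  linarith

theorem y_mem_of_z_mem [NeZero k] (hk : 2 ≤ k) (hX : Improves W P10 X) {j : Fin k}
    (hz : z j ∈ X) (hs : 0 ≤ s) (ha : ∀ i, 0 ≤ a i) : y j ∈ X := by
  by_contra hy
  have hgain := hX _ hz
  rw [sum_P10_z hk, sum_w10_z, if_neg hy] at hgain
  have hs' : -(s : ℚ) ≤ 0 := by simpa using hs
  have hv : ∑ i, (if v i j ∈ X then -(a i : ℚ) else 0) ≤ 0 :=
    sum_nonpos fun i _ => ite_zero_nonpos (by simpa using ha i)
  linarith [ite_zero_nonpos (p := z (j + 1) ∈ X) hs', ite_zero_nonpos (p := z (j - 1) ∈ X) hs']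

theorem y_add_one_mem_and_z_mem [NeZero k] (hX : Improves W P10 X) (hxX : x ∉ X) {j : Fin k}
    (hy : y j ∈ X) (hs : 1 ≤ s) (ha : ∀ i, 0 ≤ a i) (hε : 0 ≤ ε)
    (hV : ∑ i, ((a i : ℚ) + ε) ≤ s + 1 / 2) (hδ₀ : 0 ≤ δ) (hδ : δ < 1 / 2) :
    y (j + 1) ∈ X ∧ z j ∈ X := by
  have hgain := hX _ hy
  rw [sum_P10_y, sum_w10_y, if_neg hxX] at hgain
  have hs' : (1 : ℚ) ≤ s := by exact_mod_cast hs
  have hq₀ : 0 ≤ (s : ℚ) / k := by positivity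
  have hq : (s : ℚ) / k ≤ s := div_le_self (by positivity) (by exact_mod_cast NeZero.one_le)
  have hcyc : ∀ j', (if y j' ∈ X then 2 * (s : ℚ) - s / k else 0) ≤ 2 * s - s / k :=
    fun _ => ite_zero_le (by linarith)
  have hzj : (if z j ∈ X then 2 * (s : ℚ) + s / k + δ else 0) ≤ 2 * s + s / k + δ :=
    ite_zero_le (by positivity)
  have hv : ∑ i, (if v i j ∈ X then (a i : ℚ) + ε else 0) ≤ s + 1 / 2 :=
    (sum_le_sum fun i _ => ite_zero_le (by have := ha i; positivity)).trans hV
  constructor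
  · by_contra hmiss
    rw [if_neg hmiss] at hgain
    linarith [hcyc (j - 1)]
  · by_contra hmiss
    rw [if_neg hmiss] at hgain
    linarith [hcyc (j + 1), hcyc (j - 1)]

theorem sum_filter_v_mem_eq [NeZero k] (hk : 2 ≤ k) (hX : Improves W P10 X) (hxX : x ∉ X)
    (hyX : ∀ j, y j ∈ X) (hzX : ∀ j, z j ∈ X) {t : ℤ} (ht : (s : ℚ) / k = t) (hε : 0 ≤ ε)
    (hnε : n * ε ≤ 1 / 2) (hδ : δ < 1 / 2) (j : Fin k) :
    ∑ i ∈ univ.filter (v · j ∈ X), a i = t := by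
  have hzgain := hX _ (hzX j)
  rw [sum_P10_z hk, sum_w10_z, if_pos (hyX j), if_pos (hzX _), if_pos (hzX _), ← sum_filter,
    sum_neg_distrib, ← Int.cast_sum] at hzgain
  have hygain := hX _ (hyX j)
  rw [sum_P10_y, sum_w10_y, if_neg hxX, if_pos (hyX _), if_pos (hyX _), if_pos (hzX j),
    ← sum_filter, sum_add_distrib, sum_const, nsmul_eq_mul, ← Int.cast_sum] at hygain
  have hcard : (#(univ.filter (v · j ∈ X)) : ℚ) * ε ≤ 1 / 2 := by
    refine le_trans (mul_le_mul_of_nonneg_right ?_ hε) hnε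
    exact_mod_cast (card_filter_le _ _).trans (card_fin n).le
  set A := ∑ i ∈ univ.filter (v · j ∈ X), a i
  have hupper : A < t + 1 := by
    have : (A : ℚ) < t + 1 := by linarith
    exact_mod_cast this
  have hlower : t - 1 < A := by
    have : (t : ℚ) - 1 < A := by linarith
    exact_mod_cast this
  omega

end Blocking

theorem exists_packing_of_improves [NeZero k] (hk : 2 ≤ k) {X : Finset (BPVtx n k)}
    (hX : Improves W P10 X) (hne : X.Nonempty) (ha : ∀ i, 0 < a i) (hs : s = ∑ i, a i)
    (hs₁ : 1 ≤ s) {t : ℤ} (ht : s = k * t) (hρ : ∀ i, (ρ : ℚ) + a i + ε ≤ 0) (hε : 0 ≤ ε)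
    (hnε : n * ε = 1 / 2) (hδ₀ : 0 ≤ δ) (hδ : δ < 1 / 2) :
    ∃ Q : Fin n → Fin k, ∀ j, (k : ℤ) * ∑ i ∈ univ.filter (fun i => Q i = j), a i = s := by
  have ha₀ : ∀ i, 0 ≤ a i := fun i => (ha i).le
  have hρ₀ : ∀ i, ρ ≤ 0 := fun i => by
    have : (0 : ℚ) ≤ a i := by exact_mod_cast ha₀ i
    exact_mod_cast (by linarith [hρ i] : (ρ : ℚ) ≤ 0)
  have hxX : x ∉ X := x_notMem hX (by omega)
  obtain ⟨j₀, hj₀⟩ : ∃ j, y j ∈ X := by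
    obtain ⟨u, hu⟩ := hne
    cases u with
    | x => exact absurd hu hxX
    | y j => exact ⟨j, hu⟩
    | z j => exact ⟨j, y_mem_of_z_mem hk hX hu (by omega) ha₀⟩
    | v i j => exact ⟨j, y_mem_of_v_mem hX hu (ha₀ i) (hρ₀ i)⟩
  have hV : ∑ i, ((a i : ℚ) + ε) ≤ s + 1 / 2 := by
    rw [sum_add_distrib, sum_const, card_univ, Fintype.card_fin, nsmul_eq_mul, hnε, hs,
      Int.cast_sum]
  have hclosed := fun j (hj : y j ∈ X) =>
    y_add_one_mem_and_z_mem hX hxX hj hs₁ ha₀ hε hV hδ₀ hδ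
  have hyX : ∀ j, y j ∈ X := Fin.forall_of_forall_add_one (fun j hj => (hclosed j hj).1) hj₀
  have hzX : ∀ j, z j ∈ X := fun j => (hclosed j (hyX j)).2
  have hA := sum_filter_v_mem_eq hk hX hxX hyX hzX (t := t)
    (by rw [ht, div_eq_iff (by positivity)]; push_cast; ring) hε hnε.le hδ
  obtain ⟨Q, hQ⟩ := exists_forall_iff_eq_of_sum_filter_eq ha (R := fun i j => v i j ∈ X)
    (fun i _ _ hv hv' => eq_of_v_mem_of_v_mem hX hv hv' (ha₀ i) hε (hρ i))
    (by simp [hA, ← hs, ht])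
  refine ⟨Q, fun j => ?_⟩
  simp only [← hQ, hA, ht]

theorem improves_packingCoalition [NeZero k] (hk : 2 ≤ k) {Q : Fin n → Fin k}
    (hQ : ∀ j, (k : ℤ) * ∑ i ∈ univ.filter (fun i => Q i = j), a i = s) (hε : 0 < ε)
    (hδ : 0 < δ) : Improves W P10 (packingCoalition Q) := by
  have hA : ∀ j, ∑ i ∈ univ.filter (fun i => Q i = j), (a i : ℚ) = s / k := fun j => by
    rw [eq_div_iff (by positivity), mul_comm]
    exact_mod_cast hQ j
  intro u hu
  cases u with
  | x => simp [packingCoalition] at hu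
  | y j =>
    rw [sum_P10_y, sum_w10_y]
    simp only [packingCoalition, mem_filter, mem_univ, and_false, ↓reduceIte, and_self, zero_add,
      true_and, ← sum_filter, sum_add_distrib, hA, sum_const, nsmul_eq_mul]
    have : (0 : ℚ) ≤ #(univ.filter fun i => Q i = j) * ε := by positivity
    linarith
  | z j =>
    rw [sum_P10_z hk, sum_w10_z]
    simp only [packingCoalition, mem_filter, mem_univ, and_self, ↓reduceIte, true_and,
      ← sum_filter, sum_neg_distrib, hA]
    linarith
  | v i j =>
    rw [sum_P10_v, sum_w10_v]
    simp only [packingCoalition, mem_filter, mem_univ, true_and] at hu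
    subst hu
    simpa [packingCoalition, filter_eq] using hε

end BPVtx

open BPVtx in
/-- the Bin Packing gadget admits a blocking coalition iff
`a_1, …, a_n` can be partitioned into `k` sets each of sum `s/k`. -/
theorem binpacking_gadget_blocking_iff (n k : ℕ) (hn : 1 ≤ n) (hk : 3 ≤ k)
    (a : Fin n → ℤ) (ha : ∀ i, 0 < a i) (s : ℤ) (hs : s = ∑ i, a i)
    (hdvd : (k : ℤ) ∣ s)
    (ρ : ℤ) (hρ : ∀ i, ρ ≤ -(a i + 1))
    (ε δ : ℚ) (hε : ε = 1 / (2 * n)) (hδ : δ = 1 / 4) :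
    (∃ X : Finset (BPVtx n k),
        Blocking (SimpleGraph.fromRel fun u v => w10 a s ρ ε δ u v ≠ 0)
          (w10 a s ρ ε δ) P10 X)
      ↔ ∃ Q : Fin n → Fin k,
          ∀ j : Fin k, (k : ℤ) * ∑ i ∈ univ.filter (fun i => Q i = j), a i = s := by
  have : NeZero k := ⟨by omega⟩
  have hk₂ : 2 ≤ k := by omega
  obtain ⟨t, ht⟩ := hdvd
  have hn₀ : (1 : ℚ) ≤ n := by exact_mod_cast hn
  have hε₀ : 0 < ε := by rw [hε]; positivity
  have hnε : n * ε = 1 / 2 := by rw [hε]; field_simp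
  have hs₁ : 1 ≤ s := hs ▸ (ha ⟨0, hn⟩).trans_le (single_le_sum (fun i _ => (ha i).le) (mem_univ _))
  have hρε : ∀ i, (ρ : ℚ) + a i + ε ≤ 0 := fun i => by
    have : (ρ : ℚ) ≤ -(a i + 1) := by exact_mod_cast hρ i
    nlinarith
  simp only [blocking_fromRel_ne_zero_iff (w10_self hk₂)]
  constructor
  · rintro ⟨X, hne, hX⟩
    exact exists_packing_of_improves hk₂ hX hne ha hs hs₁ ht hρε hε₀.le hnε (by norm_num [hδ])
      (by norm_num [hδ])
  · rintro ⟨Q, hQ⟩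
    exact ⟨packingCoalition Q, ⟨y 0, by simp [packingCoalition]⟩,
      improves_packingCoalition hk₂ hQ hε₀ (by norm_num [hδ])⟩
end
end

section
/- Let G be a finite simple graph and k ≥ 2 an integer. Let (G',w') be the ASHG in which every edge has weight 1, obtained from G by attaching to every vertex v ∈ V(G) a set P_v of k−2 new pendant vertices, each adjacent only to v. Let 𝒫 = {P_v ∪ {v} : v ∈ V(G)}. Then there exists a blocking coalition of size at most k for 𝒫 if and only if G contains a clique of size k. -/
open Finset

noncomputable section
open scoped Classical

variable {V : Type*}

/-- The weight function of the clique gadget: every edge of `G` and every pendant edge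
has weight `1` (`0` on non-edges).  `Sum.inr (v, i)` are the `k - 2` pendants of `v`. -/
def w12 {V : Type*} (G : SimpleGraph V) (k : ℕ) :
    (V ⊕ V × Fin (k - 2)) → (V ⊕ V × Fin (k - 2)) → ℚ
  | Sum.inl a, Sum.inl b => if G.Adj a b then 1 else 0
  | Sum.inl a, Sum.inr p => if a = p.1 then 1 else 0
  | Sum.inr p, Sum.inl a => if a = p.1 then 1 else 0
  | Sum.inr _, Sum.inr _ => 0

/-- The partition `{P_v ∪ {v} : v ∈ V(G)}`. -/
def P12 {V : Type*} [Fintype V] (k : ℕ) :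
    (V ⊕ V × Fin (k - 2)) → Finset (V ⊕ V × Fin (k - 2))
  | Sum.inl v => insert (Sum.inl v) (univ.image fun i : Fin (k - 2) => Sum.inr (v, i))
  | Sum.inr p => insert (Sum.inl p.1) (univ.image fun i : Fin (k - 2) => Sum.inr (p.1, i))

/-! All weights of the gadget are `1`, so a utility is a number of neighbours. A pendant has
utility `1` at home and at most `1` anywhere else (its only neighbour is its own vertex), so a
blocking coalition `X` consists of vertices of `G`. Each of them has utility `k - 2` at home and
so needs `k - 1` neighbours in `X`; with `|X| ≤ k` this forces `X` to be a `k`-clique of `G`.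
Conversely, in a `k`-clique every member has `k - 1 > k - 2` neighbours. -/

open SimpleGraph Function

section

variable {α : Type*} {H : SimpleGraph α} [DecidableRel H.Adj] {w : α → α → ℚ} {u : α}
  {X : Finset α} {k : ℕ}

theorem ut_eq_card_of_weight_eq_one (hw : ∀ v, H.Adj u v → w u v = 1) (X : Finset α) :
    ut H w X u = #{v ∈ X | H.Adj u v} := by
  rw [ut, filter_congr_decidable, sum_congr rfl fun v hv => hw v (mem_filter.1 hv).2, sum_const,
    nsmul_one]

theorem filter_adj_eq_erase_of_card (hu : u ∈ X) (h : #X ≤ #{v ∈ X | H.Adj u v} + 1) :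
    {v ∈ X | H.Adj u v} = X.erase u := by
  refine eq_of_subset_of_card_le (fun v hv => ?_) ?_
  · obtain ⟨hvX, hadj⟩ := mem_filter.1 hv
    exact mem_erase.2 ⟨hadj.ne', hvX⟩
  · rw [card_erase_of_mem hu]
    omega

theorem card_filter_adj_lt (hu : u ∈ X) : #{v ∈ X | H.Adj u v} < #X :=
  card_lt_card (filter_ssubset.2 ⟨u, hu, H.irrefl⟩)

theorem isNClique_of_card_le (hne : X.Nonempty) (hX : #X ≤ k)
    (h : ∀ u ∈ X, k ≤ #{v ∈ X | H.Adj u v} + 1) : H.IsNClique k X := by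
  obtain ⟨u₀, hu₀⟩ := hne
  have hcard : #X = k := by
    have := h u₀ hu₀
    have := card_filter_adj_lt (H := H) hu₀
    omega
  refine ⟨fun a ha b hb hab => ?_, hcard⟩
  have hfilter := filter_adj_eq_erase_of_card ha (hcard ▸ h a ha)
  have hb' : b ∈ X.erase a := mem_erase.2 ⟨Ne.symm hab, hb⟩
  exact (mem_filter.1 (hfilter ▸ hb')).2

theorem SimpleGraph.IsNClique.card_filter_adj_add_one (hX : H.IsNClique k X) (hu : u ∈ X) :
    #{v ∈ X | H.Adj u v} + 1 = k := by
  have hfilter : {v ∈ X | H.Adj u v} = X.erase u := by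
    ext v
    simp only [mem_filter, mem_erase]
    exact ⟨fun ⟨hv, hadj⟩ => ⟨hadj.ne', hv⟩,
      fun ⟨hne, hv⟩ => ⟨hv, hX.isClique hu hv (Ne.symm hne)⟩⟩
  rw [hfilter, card_erase_add_one hu, hX.card_eq]

end

section PendantGadget

variable {G : SimpleGraph V} {k : ℕ}

def pendantGraph (G : SimpleGraph V) (k : ℕ) : SimpleGraph (V ⊕ V × Fin (k - 2)) :=
  SimpleGraph.fromRel fun u v => w12 G k u v ≠ 0

@[simp]
theorem pendantGraph_adj_inl_inl {a b : V} :
    (pendantGraph G k).Adj (.inl a) (.inl b) ↔ G.Adj a b := by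
  simp only [pendantGraph, fromRel_adj, w12, G.adj_comm b a, or_self, Sum.inl.injEq, ne_eq,
    ite_eq_right_iff, one_ne_zero, imp_false, not_not]
  exact ⟨And.right, fun h => ⟨h.ne, h⟩⟩

@[simp]
theorem pendantGraph_adj_inl_inr {a : V} {p : V × Fin (k - 2)} :
    (pendantGraph G k).Adj (.inl a) (.inr p) ↔ a = p.1 := by
  simp [pendantGraph, fromRel_adj, w12]

@[simp]
theorem pendantGraph_adj_inr_inl {a : V} {p : V × Fin (k - 2)} :
    (pendantGraph G k).Adj (.inr p) (.inl a) ↔ a = p.1 := by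
  simp [pendantGraph, fromRel_adj, w12]

@[simp]
theorem not_pendantGraph_adj_inr_inr {p q : V × Fin (k - 2)} :
    ¬ (pendantGraph G k).Adj (.inr p) (.inr q) := by
  simp [pendantGraph, fromRel_adj, w12]

theorem w12_eq_one_of_adj {x y : V ⊕ V × Fin (k - 2)} (h : (pendantGraph G k).Adj x y) :
    w12 G k x y = 1 := by
  rcases x with a | p <;> rcases y with b | q <;> simp_all [w12]

theorem ut_pendantGraph (X : Finset (V ⊕ V × Fin (k - 2))) (x : V ⊕ V × Fin (k - 2)) :
    ut (pendantGraph G k) (w12 G k) X x = #{y ∈ X | (pendantGraph G k).Adj x y} :=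
  ut_eq_card_of_weight_eq_one (fun _ => w12_eq_one_of_adj) X

theorem isNClique_map_inl_iff {n : ℕ} {C : Finset V} :
    (pendantGraph G k).IsNClique n (C.map Embedding.inl) ↔ G.IsNClique n C := by
  simp [isNClique_iff, isClique_iff, Set.Pairwise]

variable [Fintype V]

theorem ut_P12_inl (v : V) :
    ut (pendantGraph G k) (w12 G k) (P12 k (.inl v)) (.inl v) = (k - 2 : ℕ) := by
  rw [ut_pendantGraph]
  have hinj : Injective fun i : Fin (k - 2) => (Sum.inr (v, i) : V ⊕ V × Fin (k - 2)) :=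
    Sum.inr_injective.comp (Prod.mk_right_injective v)
  simp [P12, filter_insert, filter_image, card_image_of_injective _ hinj]

theorem ut_P12_inr (p : V × Fin (k - 2)) :
    ut (pendantGraph G k) (w12 G k) (P12 k (.inr p)) (.inr p) = 1 := by
  rw [ut_pendantGraph]
  simp [P12, filter_insert, filter_image]

theorem Blocking.toRight_eq_empty {X : Finset (V ⊕ V × Fin (k - 2))}
    (hX : Blocking (pendantGraph G k) (w12 G k) (P12 k) X) : X.toRight = ∅ := by
  refine eq_empty_of_forall_notMem fun p hp => ?_
  have hlt := hX.2 _ (mem_toRight.1 hp)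
  rw [ut_P12_inr, ut_pendantGraph] at hlt
  have hsub : {y ∈ X | (pendantGraph G k).Adj (.inr p) y} ⊆ {.inl p.1} := fun y hy => by
    rcases y with a | q <;> simp_all
  have hle := (card_le_card hsub).trans_eq (card_singleton _)
  norm_cast at hlt
  omega

theorem Blocking.isNClique_toLeft {X : Finset (V ⊕ V × Fin (k - 2))}
    (hX : Blocking (pendantGraph G k) (w12 G k) (P12 k) X) (hcard : #X ≤ k) :
    G.IsNClique k X.toLeft := by
  have hX_eq : X.toLeft.map Embedding.inl = X := by
    rw [← disjSum_empty, ← hX.toRight_eq_empty, toLeft_disjSum_toRight]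
  rw [← isNClique_map_inl_iff, hX_eq]
  refine isNClique_of_card_le hX.1 hcard fun x hx => ?_
  have hlt := hX.2 x hx
  rw [← hX_eq] at hx
  obtain ⟨u, -, rfl⟩ := mem_map.1 hx
  rw [Embedding.inl_apply] at hlt ⊢
  rw [ut_P12_inl, ut_pendantGraph] at hlt
  norm_cast at hlt
  omega

theorem blocking_map_inl_of_isNClique (hk : 2 ≤ k) {C : Finset V} (hC : G.IsNClique k C) :
    Blocking (pendantGraph G k) (w12 G k) (P12 k) (C.map Embedding.inl) := by
  refine ⟨(card_pos.1 (hC.card_eq ▸ by omega)).map, fun x hx => ?_⟩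
  have hdeg := (isNClique_map_inl_iff.2 hC).card_filter_adj_add_one hx
  obtain ⟨u, -, rfl⟩ := mem_map.1 hx
  rw [Embedding.inl_apply] at hdeg ⊢
  rw [ut_P12_inl, ut_pendantGraph]
  exact_mod_cast (by omega : k - 2 < _)

end PendantGadget

/-- the pendant gadget admits a blocking coalition of size at most `k`
iff `G` contains a clique of size `k`. -/
theorem pendant_gadget_blocking_iff_clique (V : Type*) [Fintype V]
    (G : SimpleGraph V) (k : ℕ) (hk : 2 ≤ k) :
    (∃ X : Finset (V ⊕ V × Fin (k - 2)),
        Blocking (SimpleGraph.fromRel fun u v => w12 G k u v ≠ 0)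
          (w12 G k) (P12 k) X ∧ X.card ≤ k)
      ↔ ∃ C : Finset V, C.card = k ∧ ∀ a ∈ C, ∀ b ∈ C, a ≠ b → G.Adj a b := by
  have hclique (C : Finset V) :
      (#C = k ∧ ∀ a ∈ C, ∀ b ∈ C, a ≠ b → G.Adj a b) ↔ G.IsNClique k C := by
    rw [isNClique_iff, isClique_iff, and_comm]
    rfl
  simp only [hclique]
  constructor
  · rintro ⟨X, hX, hcard⟩
    exact ⟨X.toLeft, Blocking.isNClique_toLeft hX hcard⟩
  · rintro ⟨C, hC⟩
    exact ⟨C.map Embedding.inl, blocking_map_inl_of_isNClique hk hC,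
      (card_map _).trans_le hC.card_eq.le⟩
end
end

section
/- Let G be a finite simple chordal graph, i.e. every cycle of G of length at least 4 has a chord. Let F ⊆ E(G) be a set of edges such that for all vertices u_1, u_2, u_3 that are pairwise adjacent in G, if u_1u_2 ∈ F and u_2u_3 ∈ F then u_1u_3 ∈ F. Then for every edge uv ∈ E(G): uv ∈ F if and only if u and v lie in the same connected component of the graph (V(G), F). -/
/-!
Let `H ≤ G` (here the graph with edge set `F`) be transitive on the triangles of `G`. By induction
on the length of an `H`-path `p` from `u` to `v`, `G.Adj u v` implies `H.Adj u v`. Length two is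
transitivity. A longer `p` closes up with `uv` to a cycle of length at least four; a chord `xy`
cuts `p` into `u ⋯ x`, a shorter `H`-path `x ⋯ y` of length at least two, and `y ⋯ v`. Induction
gives `H.Adj x y`, and then, applied to the even shorter walk `u ⋯ x y ⋯ v`, `H.Adj u v`.
-/

namespace SimpleGraph

variable {V : Type*} {G H : SimpleGraph V}

def IsChordal (G : SimpleGraph V) : Prop :=
  ∀ (v : V) (c : G.Walk v v), c.IsCycle → 4 ≤ c.length →
    ∃ a b : V, a ∈ c.support ∧ b ∈ c.support ∧ G.Adj a b ∧ s(a, b) ∉ c.edges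

namespace Walk

theorem exists_eq_append_append_of_mem_support {u v a b : V} (p : G.Walk u v)
    (ha : a ∈ p.support) (hb : b ∈ p.support) :
    ∃ x y, s(x, y) = s(a, b) ∧ ∃ (w₁ : G.Walk u x) (w₂ : G.Walk x y) (w₃ : G.Walk y v),
      p = w₁.append (w₂.append w₃) := by
  classical
  rw [← p.take_spec ha, mem_support_append_iff] at hb
  rcases hb with hb | hb
  · refine ⟨b, a, Sym2.eq_swap, (p.takeUntil a ha).takeUntil b hb,
      (p.takeUntil a ha).dropUntil b hb, p.dropUntil a ha, ?_⟩
    rw [append_assoc, take_spec, take_spec]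
  · exact ⟨a, b, rfl, p.takeUntil a ha, (p.dropUntil a ha).takeUntil b hb,
      (p.dropUntil a ha).dropUntil b hb, by rw [take_spec, take_spec]⟩

theorem two_le_length_of_ne_of_notMem_edges {x y : V} (w : G.Walk x y) (hne : x ≠ y)
    (hxy : s(x, y) ∉ w.edges) : 2 ≤ w.length := by
  match w with
  | nil => exact absurd rfl hne
  | cons _ nil => simp at hxy
  | cons _ (cons _ _) => simp

end Walk

theorem IsChordal.exists_chord_split (hG : G.IsChordal) (hHG : H ≤ G) {u v : V}
    (p : H.Walk u v) (hp : p.IsPath) (huv : G.Adj u v) (h3 : 3 ≤ p.length) :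
    ∃ x y, G.Adj x y ∧ ∃ (w₁ : H.Walk u x) (w₂ : H.Walk x y) (w₃ : H.Walk y v),
      p = w₁.append (w₂.append w₃) ∧ 2 ≤ w₂.length ∧ 1 ≤ w₁.length + w₃.length := by
  have hcycle : (Walk.cons huv.symm (p.mapLe hHG)).IsCycle := by
    refine (Walk.cons_isCycle_iff _ _).mpr ⟨hp.mapLe hHG, fun h => ?_⟩
    rw [Walk.edges_mapLe_eq_edges, Sym2.eq_swap] at h
    have := hp.length_eq_one_of_mem_edges h
    omega
  obtain ⟨a, b, ha, hb, hab, habc⟩ := hG v _ hcycle (by simpa using h3)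
  simp only [Walk.support_cons, Walk.support_mapLe_eq_support, List.mem_cons] at ha hb
  simp only [Walk.edges_cons, Walk.edges_mapLe_eq_edges, List.mem_cons, not_or] at habc
  obtain ⟨habvu, habp⟩ := habc
  obtain ⟨x, y, hxy, w₁, w₂, w₃, rfl⟩ := p.exists_eq_append_append_of_mem_support
    (ha.elim (· ▸ p.end_mem_support) id) (hb.elim (· ▸ p.end_mem_support) id)
  rw [← hxy] at habvu habp
  have hGxy : G.Adj x y := by rwa [← G.mem_edgeSet, hxy]
  refine ⟨x, y, hGxy, w₁, w₂, w₃, rfl, w₂.two_le_length_of_ne_of_notMem_edges hGxy.ne ?_, ?_⟩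
  · simp_all [Walk.edges_append]
  · by_contra! h0
    obtain rfl := w₁.eq_of_length_eq_zero (by omega)
    obtain rfl := w₃.eq_of_length_eq_zero (by omega)
    exact habvu Sym2.eq_swap

theorem IsChordal.adj_of_isPath (hG : G.IsChordal) (hHG : H ≤ G)
    (htrans : ∀ a b c, H.Adj a b → H.Adj b c → G.Adj a c → H.Adj a c)
    {u v : V} (p : H.Walk u v) (hp : p.IsPath) (huv : G.Adj u v)
    (ih : ∀ x y (q : H.Walk x y), q.length < p.length → G.Adj x y → H.Adj x y) :
    H.Adj u v := by
  by_cases h3 : 3 ≤ p.length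
  · obtain ⟨x, y, hGxy, w₁, w₂, w₃, rfl, h2, h1⟩ := hG.exists_chord_split hHG p hp huv h3
    simp only [Walk.length_append] at ih
    have hHxy : H.Adj x y := ih x y w₂ (by omega) hGxy
    exact ih u v (w₁.append (.cons hHxy w₃))
      (by simp only [Walk.length_append, Walk.length_cons]; omega) huv
  · match p with
    | .nil => exact absurd rfl huv.ne
    | .cons h .nil => exact h
    | .cons h (.cons h' .nil) => exact htrans _ _ _ h h' huv
    | .cons _ (.cons _ (.cons _ _)) => simp at h3

theorem IsChordal.adj_of_reachable (hG : G.IsChordal) (hHG : H ≤ G)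
    (htrans : ∀ a b c, H.Adj a b → H.Adj b c → G.Adj a c → H.Adj a c)
    {u v : V} (h : H.Reachable u v) (huv : G.Adj u v) : H.Adj u v := by
  classical
  obtain ⟨p⟩ := h
  induction hn : p.length using Nat.strong_induction_on generalizing u v with
  | _ n ih =>
    refine hG.adj_of_isPath hHG htrans p.bypass p.bypass_isPath huv fun x y q hq hxy => ?_
    exact ih q.length (hn ▸ hq.trans_le p.length_bypass_le_length) hxy q rfl

end SimpleGraph

theorem chordal_triangle_transitive_edges_general {V : Type*}
    (G : SimpleGraph V)
    (hchordal : ∀ (v : V) (c : G.Walk v v), c.IsCycle → 4 ≤ c.length →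
      ∃ a b : V, a ∈ c.support ∧ b ∈ c.support ∧ G.Adj a b ∧ s(a, b) ∉ c.edges)
    (F : Set (Sym2 V)) (hF : F ⊆ G.edgeSet)
    (htrans : ∀ u₁ u₂ u₃ : V, G.Adj u₁ u₂ → G.Adj u₂ u₃ → G.Adj u₁ u₃ →
      s(u₁, u₂) ∈ F → s(u₂, u₃) ∈ F → s(u₁, u₃) ∈ F) :
    ∀ u v : V, G.Adj u v →
      (s(u, v) ∈ F ↔ (SimpleGraph.fromEdgeSet F).Reachable u v) := by
  intro u v huv
  have hHG : SimpleGraph.fromEdgeSet F ≤ G :=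
    (SimpleGraph.fromEdgeSet_mono hF).trans_eq G.fromEdgeSet_edgeSet
  have hHtrans : ∀ a b c, (SimpleGraph.fromEdgeSet F).Adj a b →
      (SimpleGraph.fromEdgeSet F).Adj b c → G.Adj a c → (SimpleGraph.fromEdgeSet F).Adj a c := by
    intro a b c hab hbc hac
    rw [SimpleGraph.fromEdgeSet_adj] at hab hbc ⊢
    exact ⟨htrans a b c (hHG hab) (hHG hbc) hac hab.1 hbc.1, hac.ne⟩
  constructor
  · exact fun h => (SimpleGraph.fromEdgeSet_adj F |>.mpr ⟨h, huv.ne⟩).reachable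
  · exact fun h => (SimpleGraph.fromEdgeSet_adj F |>.mp
      (SimpleGraph.IsChordal.adj_of_reachable hchordal hHG hHtrans h huv)).1

/-- in a chordal graph, if a set `F` of edges is transitive on triangles,
then an edge of the graph belongs to `F` iff its endpoints are connected in the
spanning subgraph with edge set `F`. -/
theorem chordal_triangle_transitive_edges {V : Type*} [Fintype V]
    (G : SimpleGraph V)
    (hchordal : ∀ (v : V) (c : G.Walk v v), c.IsCycle → 4 ≤ c.length →
      ∃ a b : V, a ∈ c.support ∧ b ∈ c.support ∧ G.Adj a b ∧ s(a, b) ∉ c.edges)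
    (F : Set (Sym2 V)) (hF : F ⊆ G.edgeSet)
    (htrans : ∀ u₁ u₂ u₃ : V, G.Adj u₁ u₂ → G.Adj u₂ u₃ → G.Adj u₁ u₃ →
      s(u₁, u₂) ∈ F → s(u₂, u₃) ∈ F → s(u₁, u₃) ∈ F) :
    ∀ u v : V, G.Adj u v →
      (s(u, v) ∈ F ↔ (SimpleGraph.fromEdgeSet F).Reachable u v) :=
  chordal_triangle_transitive_edges_general G hchordal F hF htrans
end

section
/- Let (T,w) be an ASHG whose underlying graph is a tree rooted at a vertex r, and let 𝒫 be a partition of V(T). For u ∈ V(T) let T_u denote the subtree rooted at u; call a set X ⊆ V(T_u) with u ∈ X downwards blocking if ut(X,v) > ut_𝒫(v) for every v ∈ X∖{u}, and let utb(u) be the maximum of ut(X,u) over all downwards blocking X ⊆ V(T_u) containing u (this maximum exists since X = {u} is downwards blocking). Then for every vertex u with children v_1,...,v_ℓ: utb(u) = Σ w(u v_i), where the sum is over those i ∈ {1,...,ℓ} with w(u v_i) ≥ 0 and utb(v_i) + w(u v_i) > ut_𝒫(v_i). -/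
open Finset

noncomputable section
open scoped Classical

variable {V : Type*}

/-- `Desc G r u` is the vertex set of the subtree rooted at `u` of the tree `G`
rooted at `r`: the vertices `v` such that `u` lies on the (unique) path from `v`
to the root `r`. -/
def Desc (G : SimpleGraph V) (r u : V) : Set V :=
  {v | ∀ p : G.Walk v r, p.IsPath → u ∈ p.support}

/-- `X` is a downwards blocking coalition at `u`: it contains `u`, lives inside the
subtree rooted at `u`, and every member other than `u` strictly improves. -/
def DownBlocking (G : SimpleGraph V) (w : V → V → ℚ) (P : V → Finset V) (r u : V)
    (X : Finset V) : Prop :=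
  u ∈ X ∧ (∀ v ∈ X, v ∈ Desc G r u) ∧
    ∀ v ∈ X, v ≠ u → ut G w (P v) v < ut G w X v

namespace DescAux

open SimpleGraph

variable {G : SimpleGraph V} {r : V}

lemma desc_self (u : V) : u ∈ Desc G r u := fun p _ => p.start_mem_support

lemma desc_trans {u v x : V} (hv : v ∈ Desc G r u) (hx : x ∈ Desc G r v) :
    x ∈ Desc G r u := by
  intro p hp
  have hvp : v ∈ p.support := hx p hp
  exact Walk.support_dropUntil_subset p hvp (hv _ (hp.dropUntil hvp))

lemma not_desc_iff {x v : V} :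
    x ∉ Desc G r v ↔ ∃ p : G.Walk x r, p.IsPath ∧ v ∉ p.support := by
  simp only [Desc, Set.mem_setOf_eq]; push_neg; rfl

lemma desc_adj {v x y : V} (hx : x ∈ Desc G r v) (hadj : G.Adj x y)
    (hy : y ∉ Desc G r v) : x = v := by
  obtain ⟨q, hq, hvq⟩ := not_desc_iff.mp hy
  by_contra hxv
  by_cases hxq : x ∈ q.support
  · exact hvq (Walk.support_dropUntil_subset q hxq (hx _ (hq.dropUntil hxq)))
  · have hp : (q.cons hadj).IsPath := hq.cons hxq
    have hv := hx _ hp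
    rw [Walk.support_cons, List.mem_cons] at hv
    rcases hv with hv | hv
    · exact hxv hv.symm
    · exact hvq hv

lemma not_desc_of_child (hc : G.Connected) {u v : V} (hadj : G.Adj u v)
    (hv : v ∈ Desc G r u) : u ∉ Desc G r v := by
  obtain ⟨p0⟩ := hc.preconnected u r
  intro hu
  set p : G.Path u r := p0.toPath with hpdef
  have hp : (p : G.Walk u r).IsPath := p.2
  have hvp : v ∈ (p : G.Walk u r).support := hu _ hp
  have huq : u ∈ ((p : G.Walk u r).dropUntil v hvp).support := hv _ (hp.dropUntil hvp)
  have hnd := hp.support_nodup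
  rw [← Walk.take_spec _ hvp, Walk.support_append] at hnd
  have hmem : u ∈ ((p : G.Walk u r).dropUntil v hvp).support.tail := by
    rw [Walk.support_eq_cons, List.mem_cons] at huq
    rcases huq with huq | huq
    · exact absurd huq hadj.ne
    · exact huq
  exact (List.disjoint_of_nodup_append hnd) (Walk.start_mem_support _) hmem

lemma desc_of_exists (hG : G.IsTree) {x v : V} (p : G.Walk x r) (hp : p.IsPath)
    (hv : v ∈ p.support) : x ∈ Desc G r v := by
  intro q hq
  rw [(hG.existsUnique_path x r).unique hq hp]
  exact hv

lemma parent_unique (hG : G.IsTree) {v y y' : V} (h1 : G.Adj v y) (h2 : G.Adj v y')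
    (hy : y ∉ Desc G r v) (hy' : y' ∉ Desc G r v) : y = y' := by
  obtain ⟨q, hq, hvq⟩ := not_desc_iff.mp hy
  obtain ⟨q', hq', hvq'⟩ := not_desc_iff.mp hy'
  have hp : (q.cons h1).IsPath := hq.cons hvq
  have hp' : (q'.cons h2).IsPath := hq'.cons hvq'
  have heq := (hG.existsUnique_path v r).unique hp hp'
  have := congrArg (fun z => z.getVert 1) heq
  simpa [Walk.getVert_cons_succ] using this

lemma desc_disjoint (hG : G.IsTree) {u v v' x : V} (h1 : G.Adj u v) (h2 : G.Adj u v')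
    (hv : v ∈ Desc G r u) (hv' : v' ∈ Desc G r u) (hne : v ≠ v')
    (hx : x ∈ Desc G r v) (hx' : x ∈ Desc G r v') : False := by
  obtain ⟨p0⟩ := hG.isConnected.preconnected x r
  set p : G.Path x r := p0.toPath with hpdef
  have hp : (p : G.Walk x r).IsPath := p.2
  have hvp : v ∈ (p : G.Walk x r).support := hx _ hp
  obtain ⟨q, s, hqs⟩ := Walk.mem_support_iff_exists_append.mp hvp
  have hp' : (q.append s).IsPath := by rw [← hqs]; exact hp
  have hv'p : v' ∈ (q.append s).support := by rw [← hqs]; exact hx' _ hp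
  rw [Walk.mem_support_append_iff] at hv'p
  rcases hv'p with h | h
  · obtain ⟨q1, q2, hq12⟩ := Walk.mem_support_iff_exists_append.mp h
    have hassoc : q.append s = q1.append (q2.append s) := by
      rw [hq12, Walk.append_assoc]
    have h2s : (q2.append s).IsPath := by
      rw [hassoc] at hp'
      exact hp'.of_append_right
    have hvmem : v ∈ (q2.append s).support := by
      rw [Walk.mem_support_append_iff]
      exact Or.inr s.start_mem_support
    have hdesc : v' ∈ Desc G r v := desc_of_exists hG _ h2s hvmem
    exact hne (desc_adj hdesc h2.symm (not_desc_of_child hG.isConnected h1 hv)).symm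
  · have hdesc : v ∈ Desc G r v' := desc_of_exists hG _ hp'.of_append_right h
    exact hne (desc_adj hdesc h1.symm (not_desc_of_child hG.isConnected h2 hv'))

end DescAux

/-- in a rooted tree, the maximal utility `utb u` that `u` can attain in a
downwards blocking coalition satisfies the bottom-up recurrence
`utb u = Σ { w(u v) : v a child of u, w(u v) ≥ 0, utb v + w(u v) > ut_𝒫(v) }`. -/
theorem tree_downwards_blocking_recurrence [Fintype V]
    (G : SimpleGraph V) (hG : G.IsTree) (r : V)
    (w : V → V → ℚ) (hw : ∀ u v, w u v = w v u)
    (P : V → Finset V) (hP : IsPartitionFun P)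
    (utb : V → ℚ)
    (hutb : ∀ u, IsGreatest
      {q : ℚ | ∃ X : Finset V, DownBlocking G w P r u X ∧ q = ut G w X u} (utb u)) :
    ∀ u : V, utb u =
      ∑ v ∈ univ.filter (fun v => G.Adj u v ∧ v ∈ Desc G r u ∧ 0 ≤ w u v ∧
          ut G w (P v) v < utb v + w u v), w u v := by
  intro u
  have hcon := hG.isConnected
  set S : Finset V := univ.filter (fun v => G.Adj u v ∧ v ∈ Desc G r u ∧ 0 ≤ w u v ∧
      ut G w (P v) v < utb v + w u v) with hSdef
  have hSmem : ∀ v, v ∈ S ↔ (G.Adj u v ∧ v ∈ Desc G r u ∧ 0 ≤ w u v ∧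
      ut G w (P v) v < utb v + w u v) := by
    intro v; simp only [hSdef, mem_filter, mem_univ, true_and]
  apply le_antisymm
  · -- utb u ≤ ∑
    obtain ⟨X, ⟨huX, hXD, hXb⟩, hq⟩ := (hutb u).1
    rw [hq]
    show ∑ v ∈ X.filter (fun v => G.Adj u v), w u v ≤ _
    have hkey : ∀ v ∈ X.filter (fun v => G.Adj u v), 0 ≤ w u v → v ∈ S := by
      intro v hv hwv
      rw [mem_filter] at hv
      obtain ⟨hvX, hadj⟩ := hv
      have hvD : v ∈ Desc G r u := hXD v hvX
      have hvu : v ≠ u := hadj.ne'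
      have hunotv : u ∉ Desc G r v := DescAux.not_desc_of_child hcon hadj hvD
      set Xv : Finset V := X.filter (fun y => y ∈ Desc G r v) with hXvdef
      have hXvsub : ∀ y ∈ Xv, y ∈ Desc G r v := by
        intro y hy; rw [hXvdef, mem_filter] at hy; exact hy.2
      have hXvX : ∀ y ∈ Xv, y ∈ X := by
        intro y hy; rw [hXvdef, mem_filter] at hy; exact hy.1
      have hvXv : v ∈ Xv := by
        rw [hXvdef, mem_filter]; exact ⟨hvX, DescAux.desc_self v⟩
      have hsame : ∀ x ∈ Xv, x ≠ v →
          X.filter (fun y => G.Adj x y) = Xv.filter (fun y => G.Adj x y) := by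
        intro x hx hxv
        have hxD : x ∈ Desc G r v := hXvsub x hx
        ext y
        rw [mem_filter, mem_filter, hXvdef, mem_filter]
        constructor
        · rintro ⟨hyX, hadjy⟩
          refine ⟨⟨hyX, ?_⟩, hadjy⟩
          by_contra hyD
          exact hxv (DescAux.desc_adj hxD hadjy hyD)
        · rintro ⟨⟨hyX, _⟩, hadjy⟩; exact ⟨hyX, hadjy⟩
      have hdown : DownBlocking G w P r v Xv := by
        refine ⟨hvXv, hXvsub, ?_⟩
        intro x hx hxv
        have hxu : x ≠ u := fun h => hunotv (h ▸ hXvsub x hx)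
        have hlt := hXb x (hXvX x hx) hxu
        have heq : ut G w X x = ut G w Xv x := by
          unfold ut; rw [hsame x hx hxv]
        linarith
      have hle : ut G w Xv v ≤ utb v := (hutb v).2 ⟨Xv, hdown, rfl⟩
      have hnotmem : u ∉ Xv.filter (fun y => G.Adj v y) := by
        intro h
        exact hunotv (hXvsub u (mem_filter.mp h).1)
      have hfil : X.filter (fun y => G.Adj v y) =
          insert u (Xv.filter (fun y => G.Adj v y)) := by
        ext y
        rw [mem_filter, mem_insert, mem_filter, hXvdef, mem_filter]
        constructor
        · rintro ⟨hyX, hadjy⟩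
          by_cases hyD : y ∈ Desc G r v
          · exact Or.inr ⟨⟨hyX, hyD⟩, hadjy⟩
          · exact Or.inl (DescAux.parent_unique hG hadjy hadj.symm hyD hunotv)
        · rintro (rfl | ⟨⟨hyX, _⟩, hadjy⟩)
          · exact ⟨huX, hadj.symm⟩
          · exact ⟨hyX, hadjy⟩
      have hval : ut G w X v = w v u + ut G w Xv v := by
        unfold ut; rw [hfil, Finset.sum_insert hnotmem]
      have hPb := hXb v hvX hvu
      rw [hSmem]
      refine ⟨hadj, hvD, hwv, ?_⟩
      have hsym := hw v u
      linarith
    have h1 : ∑ v ∈ X.filter (fun v => G.Adj u v), w u v ≤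
        ∑ v ∈ (X.filter (fun v => G.Adj u v)).filter (fun v => 0 ≤ w u v), w u v := by
      rw [← Finset.sum_filter_add_sum_filter_not (X.filter (fun v => G.Adj u v))
        (fun v => 0 ≤ w u v)]
      have hnp : ∑ v ∈ (X.filter (fun v => G.Adj u v)).filter (fun v => ¬ 0 ≤ w u v),
          w u v ≤ 0 :=
        Finset.sum_nonpos (fun i hi => le_of_lt (lt_of_not_ge (mem_filter.mp hi).2))
      linarith
    have h2 : (X.filter (fun v => G.Adj u v)).filter (fun v => 0 ≤ w u v) ⊆ S := by
      intro v hv; rw [mem_filter] at hv; exact hkey v hv.1 hv.2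
    have h3 : ∑ v ∈ (X.filter (fun v => G.Adj u v)).filter (fun v => 0 ≤ w u v), w u v ≤
        ∑ v ∈ S, w u v :=
      Finset.sum_le_sum_of_subset_of_nonneg h2
        (fun i hiS _ => ((hSmem i).1 hiS).2.2.1)
    linarith
  · -- ∑ ≤ utb u
    choose Xf hXfD hXfq using fun v => (hutb v).1
    set Y : Finset V := insert u (S.biUnion Xf) with hYdef
    have hYmem : ∀ y, y ∈ Y ↔ y = u ∨ ∃ v ∈ S, y ∈ Xf v := by
      intro y
      rw [hYdef, mem_insert, mem_biUnion]
    have hXfsub : ∀ v, ∀ y ∈ Xf v, y ∈ Desc G r v := fun v => (hXfD v).2.1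
    have hvXf : ∀ v, v ∈ Xf v := fun v => (hXfD v).1
    have huS : ∀ v ∈ S, u ∉ Desc G r v := by
      intro v hv
      obtain ⟨hadj, hvD, _⟩ := (hSmem v).1 hv
      exact DescAux.not_desc_of_child hcon hadj hvD
    have hdisj : ∀ v ∈ S, ∀ v' ∈ S, v ≠ v' → ∀ x, x ∈ Desc G r v → x ∉ Desc G r v' := by
      intro v hv v' hv' hne x hx hx'
      obtain ⟨ha, hd, _⟩ := (hSmem v).1 hv
      obtain ⟨ha', hd', _⟩ := (hSmem v').1 hv'
      exact DescAux.desc_disjoint hG ha ha' hd hd' hne hx hx'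
    have hA : Y.filter (fun y => G.Adj u y) = S := by
      ext y
      rw [mem_filter, hYmem]
      constructor
      · rintro ⟨(rfl | ⟨v, hvS, hyXf⟩), hadj⟩
        · exact absurd hadj (G.irrefl)
        · have hyD := hXfsub v y hyXf
          have hyv : y = v := DescAux.desc_adj hyD hadj.symm (huS v hvS)
          exact hyv ▸ hvS
      · intro hyS
        exact ⟨Or.inr ⟨y, hyS, hvXf y⟩, ((hSmem y).1 hyS).1⟩
    have hutY : ut G w Y u = ∑ v ∈ S, w u v := by
      unfold ut; rw [hA]
    have hBx : ∀ v ∈ S, ∀ x ∈ Xf v, x ≠ v →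
        Y.filter (fun y => G.Adj x y) = (Xf v).filter (fun y => G.Adj x y) := by
      intro v hvS x hx hxv
      have hxD := hXfsub v x hx
      ext y
      rw [mem_filter, mem_filter, hYmem]
      constructor
      · rintro ⟨(rfl | ⟨v', hv'S, hyXf⟩), hadj⟩
        · exact absurd (DescAux.desc_adj hxD hadj (huS v hvS)) hxv
        · refine ⟨?_, hadj⟩
          by_cases hvv : v' = v
          · exact hvv ▸ hyXf
          · exfalso
            have hyD' := hXfsub v' y hyXf
            by_cases hyD : y ∈ Desc G r v
            · exact hdisj v hvS v' hv'S (Ne.symm hvv) y hyD hyD'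
            · exact hxv (DescAux.desc_adj hxD hadj hyD)
      · rintro ⟨hyXf, hadj⟩
        exact ⟨Or.inr ⟨v, hvS, hyXf⟩, hadj⟩
    have hBv : ∀ v ∈ S, Y.filter (fun y => G.Adj v y) =
        insert u ((Xf v).filter (fun y => G.Adj v y)) := by
      intro v hvS
      obtain ⟨hadj, hvD, _⟩ := (hSmem v).1 hvS
      ext y
      simp only [mem_filter, mem_insert, mem_biUnion, hYdef]
      constructor
      · rintro ⟨(rfl | ⟨v', hv'S, hyXf⟩), hadjy⟩
        · exact Or.inl rfl
        · by_cases hvv : v' = v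
          · exact Or.inr ⟨hvv ▸ hyXf, hadjy⟩
          · have hyD' := hXfsub v' y hyXf
            by_cases hyD : y ∈ Desc G r v
            · exact (hdisj v hvS v' hv'S (Ne.symm hvv) y hyD hyD').elim
            · exact Or.inl (DescAux.parent_unique hG hadjy hadj.symm hyD (huS v hvS))
      · rintro (rfl | ⟨hyXf, hadjy⟩)
        · exact ⟨Or.inl rfl, hadj.symm⟩
        · exact ⟨Or.inr ⟨v, hvS, hyXf⟩, hadjy⟩
    have hdown : DownBlocking G w P r u Y := by
      refine ⟨(hYmem u).2 (Or.inl rfl), ?_, ?_⟩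
      · intro y hy
        rcases (hYmem y).1 hy with hyu | ⟨v, hvS, hyXf⟩
        · rw [hyu]; exact DescAux.desc_self u
        · exact DescAux.desc_trans ((hSmem v).1 hvS).2.1 (hXfsub v y hyXf)
      · intro x hx hxu
        rcases (hYmem x).1 hx with hxu' | ⟨v, hvS, hxXf⟩
        · exact absurd hxu' hxu
        · by_cases hxv : x = v
          · subst hxv
            have hnot : u ∉ (Xf x).filter (fun y => G.Adj x y) := by
              intro h
              exact huS x hvS (hXfsub x u (mem_filter.mp h).1)
            have hval : ut G w Y x = w x u + ut G w (Xf x) x := by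
              unfold ut; rw [hBv x hvS, Finset.sum_insert hnot]
            obtain ⟨_, _, _, hlt⟩ := (hSmem x).1 hvS
            have hq := hXfq x
            have hsym := hw x u
            linarith
          · have heq : ut G w Y x = ut G w (Xf v) x := by
              unfold ut; rw [hBx v hvS x hxXf hxv]
            rw [heq]
            exact (hXfD v).2.2 x hxXf hxv
    have hmem : ut G w Y u ∈
        {q : ℚ | ∃ X : Finset V, DownBlocking G w P r u X ∧ q = ut G w X u} :=
      ⟨Y, hdown, rfl⟩
    have hle := (hutb u).2 hmem
    rw [hutY] at hle
    exact hle
end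
end

section
/- Let (T,w) be an ASHG whose underlying graph is a tree rooted at a vertex r, and let 𝒫 be a partition of V(T). For u ∈ V(T) let T_u denote the subtree rooted at u; call a set X ⊆ V(T_u) with u ∈ X downwards blocking if ut(X,v) > ut_𝒫(v) for every v ∈ X∖{u}, and let utb(u) be the maximum of ut(X,u) over all downwards blocking X ⊆ V(T_u) containing u. Then 𝒫 admits a blocking coalition if and only if there exists a vertex u ∈ V(T) with utb(u) > ut_𝒫(u). -/
open Finset

noncomputable section
open scoped Classical

variable {V : Type*}

/-- in a rooted tree, a partition admits a blocking coalition iff some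
vertex `u` has `utb u > ut_𝒫(u)`, where `utb u` is the maximal utility of `u` in a
downwards blocking coalition inside the subtree rooted at `u`. -/
theorem tree_blocking_iff_downwards [Fintype V]
    (G : SimpleGraph V) (hG : G.IsTree) (r : V)
    (w : V → V → ℚ) (hw : ∀ u v, w u v = w v u)
    (P : V → Finset V) (hP : IsPartitionFun P)
    (utb : V → ℚ)
    (hutb : ∀ u, IsGreatest
      {q : ℚ | ∃ X : Finset V, DownBlocking G w P r u X ∧ q = ut G w X u} (utb u)) :
    (∃ X : Finset V, Blocking G w P X) ↔ ∃ u : V, ut G w (P u) u < utb u := by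
 classical
  -- choose the unique path from each vertex to the root
  choose p hp hpu using (hG.existsUnique_path · r)
  have hdesc : ∀ v u : V, v ∈ Desc G r u ↔ u ∈ (p v).support := by
    intro v u
    constructor
    · intro h; exact h (p v) (hp v)
    · intro h q hq
      rwa [hpu v q hq]
  constructor
  · rintro ⟨X, hXne, hXblock⟩
    -- pick u ∈ X with minimal path-length to the root
    obtain ⟨u, huX, humin⟩ := X.exists_min_image (fun v => (p v).length) hXne
    -- key lemma: neighbors in X of members of X ∩ Desc u are in Desc u
    have key : ∀ v ∈ X, v ∈ Desc G r u → ∀ y ∈ X, G.Adj v y → y ∈ Desc G r u := by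
      intro v hvX hv y hyX hvy
      rw [hdesc]
      by_cases hvu : v = u
      · subst hvu
        by_contra hns
        have hcons : (SimpleGraph.Walk.cons hvy (p y)).IsPath := (hp y).cons hns
        have := hpu v _ hcons
        have hlen : (p v).length = (p y).length + 1 := by
          rw [← this, SimpleGraph.Walk.length_cons]
        have := humin y hyX
        omega
      · by_cases hvs : v ∈ (p y).support
        · have hdp : ((p y).dropUntil v hvs).IsPath := (hp y).dropUntil hvs
          have heq : (p y).dropUntil v hvs = p v := (hpu v _ hdp).symm ▸ rfl
          have hu : u ∈ ((p y).dropUntil v hvs).support := by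
            rw [hpu v _ hdp]; exact (hdesc v u).1 hv
          exact SimpleGraph.Walk.support_dropUntil_subset _ hvs hu
        · have hcons : (SimpleGraph.Walk.cons hvy (p y)).IsPath := (hp y).cons hvs
          have heq := hpu v _ hcons
          have hu : u ∈ (SimpleGraph.Walk.cons hvy (p y)).support := by
            rw [heq]; exact (hdesc v u).1 hv
          rw [SimpleGraph.Walk.support_cons] at hu
          rcases List.mem_cons.mp hu with hu' | hu'
          · exact absurd hu'.symm hvu
          · exact hu'
    have huD : u ∈ Desc G r u := by
      rw [hdesc]; exact SimpleGraph.Walk.start_mem_support _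
    set X' : Finset V := X.filter (fun v => v ∈ Desc G r u) with hX'
    have hX'sub : ∀ v ∈ X', v ∈ X ∧ v ∈ Desc G r u := by
      intro v hv; simpa [hX'] using hv
    have hutX' : ∀ v ∈ X', ut G w X' v = ut G w X v := by
      intro v hv
      obtain ⟨hvX, hvD⟩ := hX'sub v hv
      unfold ut
      congr 1
      ext y
      simp only [Finset.mem_filter, hX']
      constructor
      · rintro ⟨⟨h1, _⟩, h3⟩; exact ⟨h1, h3⟩
      · rintro ⟨h1, h3⟩; exact ⟨⟨h1, key v hvX hvD y h1 h3⟩, h3⟩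
    have huX' : u ∈ X' := by simp [hX', huX, huD]
    have hdb : DownBlocking G w P r u X' := by
      refine ⟨huX', fun v hv => (hX'sub v hv).2, fun v hv hvu => ?_⟩
      rw [hutX' v hv]
      exact hXblock v (hX'sub v hv).1
    refine ⟨u, ?_⟩
    calc ut G w (P u) u < ut G w X u := hXblock u huX
      _ = ut G w X' u := (hutX' u huX').symm
      _ ≤ utb u := (hutb u).2 ⟨X', hdb, rfl⟩
  · rintro ⟨u, hu⟩
    obtain ⟨⟨X, hdb, heq⟩, -⟩ := hutb u
    refine ⟨X, ⟨u, hdb.1⟩, fun v hv => ?_⟩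
    by_cases hvu : v = u
    · subst hvu; rw [← heq]; exact hu
    · exact hdb.2.2 v hv hvu
end
end

section
/- Let (G,w) be an ASHG, 𝒫 a partition of V(G), S ⊆ V(G) a vertex cover of G (every edge of G has at least one endpoint in S), and T ⊆ S. Define I'(T) = { v ∈ V(G)∖S : Σ_{u∈T, uv∈E(G)} w(uv) > ut_𝒫(v) }. Then there exists a blocking coalition X for 𝒫 with X ∩ S = T if and only if there exists J ⊆ I'(T) such that T ∪ J ≠ ∅ and, for every u ∈ T, Σ_{v∈J, uv∈E(G)} w(uv) + Σ_{u'∈T∖{u}, uu'∈E(G)} w(uu') > ut_𝒫(u). -/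
open Finset

noncomputable section
open scoped Classical

variable {V : Type*}

/-- given a vertex cover `S` and a guess `T ⊆ S` for the intersection of a
blocking coalition with `S`, there is a blocking coalition `X` with `X ∩ S = T` iff
some subset `J` of the candidate set `I'` makes every member of `T` strictly improve. -/
theorem vertex_cover_blocking_characterization [Fintype V]
    (G : SimpleGraph V) (w : V → V → ℚ) (hw : ∀ u v, w u v = w v u)
    (P : V → Finset V) (hP : IsPartitionFun P)
    (S : Finset V) (hS : ∀ a b : V, G.Adj a b → a ∈ S ∨ b ∈ S)
    (T : Finset V) (hT : T ⊆ S)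
    (I' : Finset V)
    (hI' : I' = univ.filter (fun v => v ∉ S ∧
        ut G w (P v) v < ∑ u ∈ T.filter (fun u => G.Adj v u), w v u)) :
    (∃ X : Finset V, Blocking G w P X ∧ X ∩ S = T) ↔
      ∃ J ⊆ I', (T ∪ J).Nonempty ∧ ∀ u ∈ T,
        ut G w (P u) u <
          (∑ v ∈ J.filter (fun v => G.Adj u v), w u v) +
            ∑ u' ∈ (T.erase u).filter (fun u' => G.Adj u u'), w u u' := by
  have key : ∀ (J : Finset V) (u : V), u ∈ T → (∀ v ∈ J, v ∉ S) →
      ut G w (T ∪ J) u =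
        (∑ v ∈ J.filter (fun v => G.Adj u v), w u v) +
          ∑ u' ∈ (T.erase u).filter (fun u' => G.Adj u u'), w u u' := by
    intro J u hu hJ
    have hdisj : Disjoint T J :=
      Finset.disjoint_left.mpr (fun x hx hx' => hJ x hx' (hT hx))
    have hTe : T.filter (fun u' => G.Adj u u') =
        (T.erase u).filter (fun u' => G.Adj u u') := by
      ext x
      simp only [mem_filter, mem_erase]
      constructor
      · rintro ⟨hx, ha⟩
        exact ⟨⟨fun h => by simp [h] at ha, hx⟩, ha⟩
      · rintro ⟨⟨_, hx⟩, ha⟩; exact ⟨hx, ha⟩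
    rw [ut, filter_union, sum_union (disjoint_filter_filter hdisj), hTe, add_comm]
  constructor
  · rintro ⟨X, ⟨hXne, hXblock⟩, hXS⟩
    have hTX : T ⊆ X := hXS ▸ inter_subset_left
    have hXeq : X = T ∪ (X \ S) := by
      ext x
      simp only [mem_union, mem_sdiff, ← hXS, mem_inter]
      by_cases hx : x ∈ S <;> by_cases hxX : x ∈ X <;> simp [hx, hxX]
    refine ⟨X \ S, ?_, ?_, ?_⟩
    · intro v hv
      simp only [mem_sdiff] at hv
      subst hI'
      simp only [mem_filter, mem_univ, true_and]
      refine ⟨hv.2, ?_⟩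
      have heq : X.filter (fun x => G.Adj v x) = T.filter (fun x => G.Adj v x) := by
        rw [← hXS]
        ext x
        simp only [mem_filter, mem_inter]
        constructor
        · rintro ⟨hx, ha⟩
          exact ⟨⟨hx, (hS v x ha).resolve_left hv.2⟩, ha⟩
        · rintro ⟨⟨hx, _⟩, ha⟩; exact ⟨hx, ha⟩
      have := hXblock v hv.1
      simp only [ut] at this ⊢
      rwa [heq] at this
    · rw [← hXeq]; exact hXne
    · intro u hu
      have := hXblock u (hTX hu)
      rwa [hXeq, key (X \ S) u hu (fun v hv => (mem_sdiff.mp hv).2)] at this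
  · rintro ⟨J, hJI, hne, hlt⟩
    have hJS : ∀ v ∈ J, v ∉ S := by
      intro v hv
      have := hJI hv
      rw [hI'] at this
      exact (mem_filter.mp this).2.1
    refine ⟨T ∪ J, ⟨hne, ?_⟩, ?_⟩
    · intro u hu
      rcases mem_union.mp hu with hu | hu
      · rw [key J u hu hJS]; exact hlt u hu
      · have huI := hJI hu
        rw [hI'] at huI
        have huI' := (mem_filter.mp huI).2
        have heq : (T ∪ J).filter (fun x => G.Adj u x)
            = T.filter (fun x => G.Adj u x) := by
          ext x
          simp only [mem_filter, mem_union]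
          constructor
          · rintro ⟨hx, ha⟩
            refine ⟨?_, ha⟩
            have hxS := (hS u x ha).resolve_left huI'.1
            rcases hx with hx | hx
            · exact hx
            · exact absurd hxS (hJS x hx)
          · rintro ⟨hx, ha⟩; exact ⟨Or.inl hx, ha⟩
        simp only [ut] at huI' ⊢
        rw [heq]
        exact huI'.2
    · ext x
      simp only [mem_inter, mem_union]
      constructor
      · rintro ⟨hx | hx, hxS⟩
        · exact hx
        · exact absurd hxS (hJS x hx)
      · intro hx; exact ⟨Or.inl hx, hT hx⟩
end
end

section
/- Let k, k', ℓ, ℓ' be natural numbers. For each i ∈ {1,...,k'} let d_i be a finite set of literals over existential variables x_1,...,x_k, and for each i ∈ {1,...,ℓ'} let c_i be a finite set of literals over variables x_1,...,x_k, y_1,...,y_ℓ. Introduce fresh universal variables y_{d_1},...,y_{d_{k'}} and y_C, and define the conjunctive clauses of ψ to be: the clause {y_{d_i}, λ} for every i ∈ {1,...,k'} and every literal λ ∈ d_i; the clause {y_C} ∪ c_i for every i ∈ {1,...,ℓ'}; and the clause {¬y_{d_1},...,¬y_{d_{k'}}, ¬y_C}. Then the following are equivalent: (1) there exists an assignment α_X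 of x_1,...,x_k under which every disjunctive clause d_i contains a true literal and such that for every assignment α_Y of y_1,...,y_ℓ at least one conjunctive clause c_i has all its literals true under (α_X,α_Y); (2) there exists an assignment α_X of x_1,...,x_k such that for every assignment of y_1,...,y_ℓ, y_{d_1},...,y_{d_{k'}}, y_C at least one conjunctive clause of ψ has all its literals true. -/
/-- correctness of the reduction from `∃3CNF∀DNF`-SAT to `∃∀`-SAT.
Existential variables are indexed by `Fin k`, universal ones by `Fin ℓ`; a literal is a
variable together with a polarity (`Bool`), and it is true under an assignment when the
assigned value equals the polarity.  `d i` are the disjunctive clauses (over existential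
variables only) and `c i` the conjunctive clauses.  The fresh universal variables
`y_{d_i}` are modelled by `αd : Fin k' → Bool` and `y_C` by `αC : Bool`. -/
theorem exists_cnf_forall_dnf_reduction (k k' l l' : ℕ)
    (d : Fin k' → Finset (Fin k × Bool))
    (c : Fin l' → Finset ((Fin k ⊕ Fin l) × Bool)) :
    (∃ αX : Fin k → Bool,
        (∀ i : Fin k', ∃ lit ∈ d i, αX lit.1 = lit.2) ∧
        (∀ αY : Fin l → Bool, ∃ i : Fin l',
          ∀ lit ∈ c i, Sum.elim αX αY lit.1 = lit.2))
      ↔ (∃ αX : Fin k → Bool,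
          ∀ αY : Fin l → Bool, ∀ αd : Fin k' → Bool, ∀ αC : Bool,
            (∃ i : Fin k', ∃ lit ∈ d i, αd i = true ∧ αX lit.1 = lit.2) ∨
            (∃ i : Fin l', αC = true ∧ ∀ lit ∈ c i, Sum.elim αX αY lit.1 = lit.2) ∨
            ((∀ i : Fin k', αd i = false) ∧ αC = false)) := by
  constructor
  · rintro ⟨αX, hd, hc⟩
    refine ⟨αX, fun αY αd αC => ?_⟩
    by_cases h : ∃ i, αd i = true
    · obtain ⟨i, hi⟩ := h
      obtain ⟨lit, hlit, hsat⟩ := hd i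
      exact Or.inl ⟨i, lit, hlit, hi, hsat⟩
    · push_neg at h
      cases hC : αC with
      | false => exact Or.inr (Or.inr ⟨fun i => Bool.eq_false_iff.mpr (h i), rfl⟩)
      | true =>
        obtain ⟨i, hi⟩ := hc αY
        exact Or.inr (Or.inl ⟨i, rfl, hi⟩)
  · rintro ⟨αX, h⟩
    refine ⟨αX, fun i => ?_, fun αY => ?_⟩
    · rcases h (fun _ => false) (fun j => decide (j = i)) false with
        ⟨j, lit, hlit, hj, hsat⟩ | ⟨_, hC, _⟩ | ⟨hall, _⟩
      · have : j = i := by simpa using hj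
        subst this; exact ⟨lit, hlit, hsat⟩
      · exact absurd hC (by simp)
      · have := hall i; simp at this
    · rcases h αY (fun _ => false) true with
        ⟨_, _, _, hj, _⟩ | ⟨i, _, hi⟩ | ⟨_, hC⟩
      · simp at hj
      · exact ⟨i, hi⟩
      · simp at hC
end
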